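/- arXiv:2303.02739 — 5 statements merged into one kernel-verified Lean document; each statement's English description precedes it below -/
import Mathlib

section
/- Let G be a path-bipartite graph of sets A and B, let a₁ ∈ A and b₁ ∈ B, let A₁ be the vertex set of the connected component of the induced graph G[A] containing a₁, and B₁ the vertex set of the connected component of G[B] containing b₁, and let C₁ = A₁ ∪ B₁. Then the following are equivalent: (1) there is a be-path of A and B contained in G joining a₁ and b₁; (2) the induced subgraph G[C₁] is connected; (3) for every a ∈ A₁ and b ∈ B₁ there is a be-path of A and B contained in G joining a and b. -/
open SimpleGraph Set

/-- A "graph on a vertex subset": a subgraph of the complete graph on `V`. -/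
abbrev Gr (V : Type) := SimpleGraph.Subgraph (⊤ : SimpleGraph V)

/-- `P` is the path graph `(u₀, …, u_k)` whose vertex list is `l`. -/
def IsPathGraphOn {V : Type} (l : List V) (P : Gr V) : Prop :=
  l.Nodup ∧ 2 ≤ l.length ∧ P.verts = {v | v ∈ l} ∧
    ∀ x y, P.Adj x y ↔ ([x, y] <:+: l ∨ [y, x] <:+: l)

/-- `P` is a path graph. -/
def IsPathGraph {V : Type} (P : Gr V) : Prop := ∃ l, IsPathGraphOn l P

/-- `P` is a path joining `a` and `b`. -/
def IsPathFrom {V : Type} (P : Gr V) (a b : V) : Prop :=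
  ∃ l, IsPathGraphOn l P ∧
    ((l.head? = some a ∧ l.getLast? = some b) ∨ (l.head? = some b ∧ l.getLast? = some a))

/-- `P` is a be-path of `A` and `B`: a path with vertices in `A ∪ B` having a unique
edge `{a₀, b₀}` meeting both `A` and `B`. -/
def IsBePath {V : Type} (A B : Set V) (P : Gr V) : Prop :=
  IsPathGraph P ∧ P.verts ⊆ A ∪ B ∧
    ∃ a₀ b₀, a₀ ∈ A ∧ b₀ ∈ B ∧ P.Adj a₀ b₀ ∧
      ∀ x y, P.Adj x y → x ∈ A → y ∈ B → x = a₀ ∧ y = b₀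

/-- `G` is a path-bipartite graph of `A` and `B`: `A`, `B` are disjoint nonempty subsets of
`V(G)` and `G` is the union of a nonempty family of be-paths of `A` and `B`. -/
def IsPathBipartite {V : Type} (A B : Set V) (G : Gr V) : Prop :=
  A.Nonempty ∧ B.Nonempty ∧ Disjoint A B ∧ A ⊆ G.verts ∧ B ⊆ G.verts ∧
    ∃ Ps : Set (Gr V), Ps.Nonempty ∧ (∀ P ∈ Ps, IsBePath A B P) ∧ G = sSup Ps

/-- `G` is connected: any two distinct vertices are joined by a path in `G`. -/
def ConnectedGr {V : Type} (G : Gr V) : Prop :=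
  ∀ u v, u ∈ G.verts → v ∈ G.verts → u ≠ v → ∃ P, P ≤ G ∧ IsPathFrom P u v

/-- `H` is a connected component of `G`: a maximal connected subgraph. -/
def IsComponent {V : Type} (G H : Gr V) : Prop :=
  H ≤ G ∧ ConnectedGr H ∧ ∀ Γ, Γ ≤ G → ConnectedGr Γ → H ≤ Γ → H = Γ

/-- Some `a ∈ A` and `b ∈ B` are joined by a be-path of `A` and `B` contained in `G`,
i.e. `(a, b) ∈ 𝓑_path(G)`. -/
def BePathJoined {V : Type} (G : Gr V) (A B : Set V) (a b : V) : Prop :=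
  ∃ P, P ≤ G ∧ IsBePath A B P ∧ IsPathFrom P a b

/-- `G` is path-complete: every `(a,b) ∈ A × B` is joined by a be-path in `G`. -/
def PathComplete {V : Type} (G : Gr V) (A B : Set V) : Prop :=
  ∀ a ∈ A, ∀ b ∈ B, BePathJoined G A B a b

/-- The induced-bipartite subgraph `G[A, B]`. -/
def induceBip {V : Type} (G : Gr V) (A B : Set V) : Gr V where
  verts := A ∪ B
  Adj x y := G.Adj x y ∧ ((x ∈ A ∧ y ∈ B) ∨ (x ∈ B ∧ y ∈ A))
  adj_sub h := G.adj_sub h.1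
  edge_vert h := h.2.elim (fun hh => Or.inl hh.1) (fun hh => Or.inr hh.1)
  symm := ⟨fun x y h => ⟨h.1.symm, h.2.elim (fun hh => Or.inr ⟨hh.2, hh.1⟩) (fun hh => Or.inl ⟨hh.2, hh.1⟩)⟩⟩

/-- `d` is a semimetric. -/
def IsSemimetric {X : Type} (d : X → X → ℝ) : Prop :=
  (∀ x y, 0 ≤ d x y) ∧ (∀ x y, d x y = d y x) ∧ ∀ x y, d x y = 0 ↔ x = y

/-- `d` is a metric. -/
def IsMetric {X : Type} (d : X → X → ℝ) : Prop :=
  IsSemimetric d ∧ ∀ x y z, d x y ≤ d x z + d z y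

/-- `d` is an ultrametric. -/
def IsUltrametric {X : Type} (d : X → X → ℝ) : Prop :=
  IsSemimetric d ∧ ∀ x y z, d x y ≤ max (d x z) (d z y)

/-- `dist(A, B) = inf{d(a,b) : a ∈ A, b ∈ B}`. -/
noncomputable def setDist {X : Type} (d : X → X → ℝ) (A B : Set X) : ℝ :=
  sInf {r | ∃ a ∈ A, ∃ b ∈ B, d a b = r}

/-- `A` is a proximinal subset: every point has a best approximation in `A`. -/
def ProximinalSet {X : Type} (d : X → X → ℝ) (A : Set X) : Prop :=
  ∀ x, ∃ a₀ ∈ A, d x a₀ = setDist d {x} A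

/-- `G` is path-proximinal for `A` and `B` w.r.t. the semimetric `d` on `X = A ∪ B`. -/
def IsPathProximinal {X : Type} (d : X → X → ℝ) (A B : Set X) (G : Gr X) : Prop :=
  IsPathBipartite A B G ∧ ProximinalSet d A ∧ ProximinalSet d B ∧
    ∀ x ∈ A ∪ B, ∀ y ∈ A ∪ B, x ≠ y → (G.Adj x y ↔ d x y ≤ setDist d A B)

/-- `G` is a proximinal bipartite graph with parts `A` and `B` for `(X, d)`. -/
def IsProximinalGraph {X : Type} (d : X → X → ℝ) (A B : Set X) (G : Gr X) : Prop :=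
  A.Nonempty ∧ B.Nonempty ∧ Disjoint A B ∧ G.verts = A ∪ B ∧
    (∀ x y, G.Adj x y → (x ∈ A ∧ y ∈ B) ∨ (x ∈ B ∧ y ∈ A)) ∧
    ProximinalSet d A ∧ ProximinalSet d B ∧
    ∀ a ∈ A, ∀ b ∈ B, (G.Adj a b ↔ d a b = setDist d A B)

section PBAux

open List Relation SimpleGraph

variable {V : Type}

/-- The path graph on a list. -/
def pathGr (l : List V) : Gr V where
  verts := {v | v ∈ l}
  Adj x y := x ≠ y ∧ ([x, y] <:+: l ∨ [y, x] <:+: l)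
  adj_sub h := by simpa using h.1
  edge_vert {x y} h := by
    rcases h.2 with h' | h'
    · exact h'.subset (by simp)
    · exact h'.subset (by simp)
  symm := ⟨fun x y h => ⟨h.1.symm, h.2.symm⟩⟩

lemma ne_of_infix_pair {l : List V} {x y : V} (hn : l.Nodup) (h : [x, y] <:+: l) : x ≠ y := by
  have := List.Nodup.sublist h.sublist hn
  simp_all

lemma chain'_of_infix {R : V → V → Prop} :
    ∀ {l : List V}, (∀ x y, [x, y] <:+: l → R x y) → Chain' R l
  | [], _ => List.isChain_nil
  | [_], _ => List.isChain_singleton _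
  | a :: b :: t, h => by
    show List.IsChain R (a :: b :: t)
    rw [List.isChain_cons_cons]
    exact ⟨h a b ⟨[], t, rfl⟩, chain'_of_infix fun x y hxy => h x y (List.infix_cons hxy)⟩

lemma rel_of_chain'_infix {R : V → V → Prop} {l : List V} (hc : Chain' R l) {x y : V}
    (h : [x, y] <:+: l) : R x y :=
  List.isChain_pair.mp (hc.infix h)

lemma pathGr_isPathGraphOn {l : List V} (hn : l.Nodup) (hl : 2 ≤ l.length) :
    IsPathGraphOn l (pathGr l) := by
  refine ⟨hn, hl, rfl, fun x y => ?_⟩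
  constructor
  · exact fun h => h.2
  · rintro (h | h)
    · exact ⟨ne_of_infix_pair hn h, Or.inl h⟩
    · exact ⟨(ne_of_infix_pair hn h).symm, Or.inr h⟩

lemma pathGr_le {H : Gr V} {l : List V} (hm : ∀ x ∈ l, x ∈ H.verts) (hc : Chain' H.Adj l) :
    pathGr l ≤ H := by
  constructor
  · exact fun x hx => hm x hx
  · rintro x y ⟨-, h | h⟩
    · exact rel_of_chain'_infix hc h
    · exact (rel_of_chain'_infix hc h).symm

/-- A convenient packaging of a nodup path-list in `H` from `u` to `v`. -/
def GoodList (H : Gr V) (l : List V) (u v : V) : Prop :=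
  l.Nodup ∧ (∀ x ∈ l, x ∈ H.verts) ∧ Chain' H.Adj l ∧
    l.head? = some u ∧ l.getLast? = some v

lemma GoodList.mono {H K : Gr V} (hHK : H ≤ K) {l : List V} {u v : V}
    (h : GoodList H l u v) : GoodList K l u v :=
  ⟨h.1, fun x hx => hHK.1 (h.2.1 x hx),
    h.2.2.1.imp (fun _ _ hab => hHK.2 hab), h.2.2.2.1, h.2.2.2.2⟩

lemma GoodList.reverse {H : Gr V} {l : List V} {u v : V} (h : GoodList H l u v) :
    GoodList H l.reverse v u := by
  obtain ⟨hn, hm, hc, hh, hl⟩ := h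
  refine ⟨List.nodup_reverse.mpr hn, fun x hx => hm x (by simpa using hx),
    List.isChain_reverse.mpr (hc.imp fun a b hab => hab.symm), ?_, ?_⟩
  · rw [List.head?_reverse, hl]
  · rw [List.getLast?_reverse, hh]

lemma GoodList.head_mem {H : Gr V} {l : List V} {u v : V} (h : GoodList H l u v) : u ∈ l := by
  obtain ⟨t, ht⟩ := List.head?_eq_some_iff.mp h.2.2.2.1
  simp [ht]

lemma GoodList.last_mem {H : Gr V} {l : List V} {u v : V} (h : GoodList H l u v) : v ∈ l := by
  obtain ⟨t, ht⟩ := List.getLast?_eq_some_iff.mp h.2.2.2.2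
  simp [ht]

lemma GoodList.append {H : Gr V} {la lb : List V} {u a₀ b₀ v : V}
    (ha : GoodList H la u a₀) (hb : GoodList H lb b₀ v)
    (hadj : H.Adj a₀ b₀) (hdisj : la.Disjoint lb) : GoodList H (la ++ lb) u v := by
  obtain ⟨hna, hma, hca, hha, hla⟩ := ha
  obtain ⟨hnb, hmb, hcb, hhb, hlb⟩ := hb
  have hane : la ≠ [] := by rintro rfl; simp at hha
  have hbne : lb ≠ [] := by rintro rfl; simp at hhb
  refine ⟨hna.append hnb hdisj, ?_, ?_, ?_, ?_⟩
  · intro x hx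
    rcases List.mem_append.mp hx with h | h
    exacts [hma x h, hmb x h]
  · refine List.isChain_append.mpr ⟨hca, hcb, ?_⟩
    intro x hx y hy
    rw [hla] at hx
    rw [hhb] at hy
    simp only [Option.mem_some_iff] at hx hy
    subst hx; subst hy
    exact hadj
  · rw [List.head?_append_of_ne_nil _ hane, hha]
  · rw [List.getLast?_append, hlb]
    rfl

lemma walk_support_mem {H : Gr V} {u v : V} (w : H.spanningCoe.Walk u v)
    (hu : u ∈ H.verts) : ∀ x ∈ w.support, x ∈ H.verts := by
  induction w with
  | nil => intro x hx; simp at hx; subst hx; exact hu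
  | cons h p ih =>
    intro x hx
    rw [SimpleGraph.Walk.support_cons] at hx
    rcases List.mem_cons.mp hx with rfl | hx'
    · exact hu
    · have hadj : H.Adj _ _ := h
      exact ih (H.edge_vert hadj.symm) x hx'

lemma goodList_of_rtg {H : Gr V} {u v : V} (hu : u ∈ H.verts)
    (h : ReflTransGen H.Adj u v) : ∃ l, GoodList H l u v := by
  classical
  have hr : H.spanningCoe.Reachable u v := (reachable_iff_reflTransGen _ _).mpr h
  obtain ⟨w⟩ := hr
  let p := w.toPath
  refine ⟨p.1.support, p.2.support_nodup, walk_support_mem p.1 hu, ?_, ?_, ?_⟩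
  · exact (SimpleGraph.Walk.isChain_adj_support p.1).imp fun a b hab => hab
  · rw [SimpleGraph.Walk.support_eq_cons]; rfl
  · rw [List.getLast?_eq_getLast (l := p.1.support) (by simp), SimpleGraph.Walk.getLast_support]

lemma exists_pathFrom_of_rtg {H : Gr V} {u v : V} (hu : u ∈ H.verts) (huv : u ≠ v)
    (h : ReflTransGen H.Adj u v) : ∃ P, P ≤ H ∧ IsPathFrom P u v := by
  obtain ⟨l, hg⟩ := goodList_of_rtg hu h
  obtain ⟨hn, hm, hc, hh, hl⟩ := hg
  obtain ⟨t, rfl⟩ := List.head?_eq_some_iff.mp hh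
  have hlen : 2 ≤ (u :: t).length := by
    cases t with
    | nil => simp at hl; exact absurd hl huv
    | cons c t' => simp
  exact ⟨pathGr (u :: t), pathGr_le hm hc,
    ⟨u :: t, pathGr_isPathGraphOn hn hlen, Or.inl ⟨hh, hl⟩⟩⟩

lemma rtg_of_goodList {H : Gr V} {l : List V} {u v : V} (h : GoodList H l u v) :
    ReflTransGen H.Adj u v := by
  obtain ⟨-, -, hc, hh, hl⟩ := h
  obtain ⟨t, rfl⟩ := List.head?_eq_some_iff.mp hh
  have hchain : List.Chain H.Adj u t := hc
  have hlast : (u :: t).getLast (by simp) = v := by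
    have := List.getLast?_eq_getLast (l := u :: t) (by simp)
    rw [this] at hl
    exact Option.some.inj hl
  exact List.relationReflTransGen_of_exists_isChain_cons t hchain hlast

lemma goodList_of_isPathFrom {P : Gr V} {u v : V} (h : IsPathFrom P u v) :
    ∃ l, GoodList P l u v := by
  obtain ⟨l, ⟨hn, _, hverts, hadj⟩, hor⟩ := h
  have hm : ∀ x ∈ l, x ∈ P.verts := fun x hx => by rw [hverts]; exact hx
  have hc : Chain' P.Adj l := chain'_of_infix fun x y hxy => (hadj x y).mpr (Or.inl hxy)
  rcases hor with ⟨hh, hl⟩ | ⟨hh, hl⟩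
  · exact ⟨l, hn, hm, hc, hh, hl⟩
  · exact ⟨l.reverse, GoodList.reverse ⟨hn, hm, hc, hh, hl⟩⟩

lemma connectedGr_iff {H : Gr V} : ConnectedGr H ↔
    ∀ u v, u ∈ H.verts → v ∈ H.verts → ReflTransGen H.Adj u v := by
  constructor
  · intro h u v hu hv
    rcases eq_or_ne u v with rfl | hne
    · exact ReflTransGen.refl
    obtain ⟨Q, hQH, hQ⟩ := h u v hu hv hne
    obtain ⟨l, hl⟩ := goodList_of_isPathFrom hQ
    exact rtg_of_goodList (hl.mono hQH)
  · intro h u v hu hv hne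
    exact exists_pathFrom_of_rtg hu hne (h u v hu hv)

lemma rtg_head {R : V → V → Prop} {a : V} {l : List V} (h : List.Chain R a l) :
    ∀ x ∈ a :: l, ReflTransGen R a x := by
  induction l generalizing a with
  | nil => intro x hx; simp at hx; subst hx; exact ReflTransGen.refl
  | cons b t ih =>
    intro x hx
    change List.IsChain R (a :: b :: t) at h
    rw [List.isChain_cons_cons] at h
    rcases List.mem_cons.mp hx with rfl | hx'
    · exact ReflTransGen.refl
    · exact ReflTransGen.head h.1 (ih h.2 x hx')

lemma comp_mem_of_goodList {G0 H : Gr V} (hH : IsComponent G0 H) {l : List V} {u v : V}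
    (hg : GoodList G0 l u v) (hu : u ∈ H.verts) : ∀ x ∈ l, x ∈ H.verts := by
  set Q := pathGr l with hQdef
  have hQle : Q ≤ G0 := pathGr_le hg.2.1 hg.2.2.1
  have hchainQ : Chain' Q.Adj l :=
    chain'_of_infix fun x y hxy => ⟨ne_of_infix_pair hg.1 hxy, Or.inl hxy⟩
  have hul : u ∈ l := hg.head_mem
  have hQsym : Symmetric Q.Adj := fun x y hxy => hxy.symm
  have hrtgQ : ∀ x ∈ l, ReflTransGen Q.Adj u x := by
    obtain ⟨t, ht⟩ := List.head?_eq_some_iff.mp hg.2.2.2.1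
    rw [ht] at hchainQ ⊢
    exact rtg_head hchainQ
  have hsupSym : Symmetric (H ⊔ Q).Adj := fun x y hxy => hxy.symm
  have hconn : ConnectedGr (H ⊔ Q) := by
    rw [connectedGr_iff]
    have htoU : ∀ z, z ∈ (H ⊔ Q).verts → ReflTransGen (H ⊔ Q).Adj z u := by
      intro z hz
      rw [SimpleGraph.Subgraph.verts_sup] at hz
      rcases hz with hz | hz
      · exact ReflTransGen.mono (show H.Adj ≤ (H ⊔ Q).Adj from
          fun a b hab => SimpleGraph.Subgraph.sup_adj.mpr (Or.inl hab)) _ _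
          (connectedGr_iff.mp hH.2.1 z u hz hu)
      · exact ReflTransGen.mono (show Q.Adj ≤ (H ⊔ Q).Adj from
          fun a b hab => SimpleGraph.Subgraph.sup_adj.mpr (Or.inr hab)) _ _
          (((@ReflTransGen.stdSymm _ _ ⟨fun _ _ h => hQsym h⟩).symm _ _) (hrtgQ z hz))
    intro x y hx hy
    exact (htoU x hx).trans (((@ReflTransGen.stdSymm _ _ ⟨fun _ _ h => hsupSym h⟩).symm _ _) (htoU y hy))
  have heq : H = H ⊔ Q := hH.2.2 (H ⊔ Q) (sup_le hH.1 hQle) hconn le_sup_left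
  intro x hx
  have hx' : x ∈ (H ⊔ Q).verts := by
    rw [SimpleGraph.Subgraph.verts_sup]; exact Or.inr hx
  rwa [← heq] at hx'

lemma comp_verts_subset {G GA : Gr V} {A : Set V} (h : IsComponent (G.induce A) GA) :
    GA.verts ⊆ A := fun x hx => by
  have := h.1.1 hx
  rwa [SimpleGraph.Subgraph.induce_verts] at this

lemma comp_le_induce {G GA : Gr V} {A C : Set V} (h : IsComponent (G.induce A) GA)
    (hAC : GA.verts ⊆ C) : GA ≤ G.induce C := by
  constructor
  · intro x hx
    rw [SimpleGraph.Subgraph.induce_verts]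
    exact hAC hx
  · intro x y hxy
    have hx : x ∈ GA.verts := GA.edge_vert hxy
    have hy : y ∈ GA.verts := GA.edge_vert hxy.symm
    have h2 := h.1.2 hxy
    rw [SimpleGraph.Subgraph.induce_adj] at h2 ⊢
    exact ⟨hAC hx, hAC hy, h2.2.2⟩

lemma induce_le_self {G : Gr V} {C : Set V} (h : C ⊆ G.verts) : G.induce C ≤ G := by
  constructor
  · intro x hx
    rw [SimpleGraph.Subgraph.induce_verts] at hx
    exact h hx
  · intro x y hxy
    rw [SimpleGraph.Subgraph.induce_adj] at hxy
    exact hxy.2.2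

lemma comp_mem_of_goodListG {G GA : Gr V} {A : Set V} (h : IsComponent (G.induce A) GA)
    {l : List V} {u v : V} (hg : GoodList G l u v) (hmem : ∀ x ∈ l, x ∈ A)
    (hu : u ∈ GA.verts) : ∀ x ∈ l, x ∈ GA.verts := by
  have hc' : Chain' (G.induce A).Adj l := chain'_of_infix fun x y hxy => by
    rw [SimpleGraph.Subgraph.induce_adj]
    exact ⟨hmem x (hxy.subset (by simp)), hmem y (hxy.subset (by simp)),
      rel_of_chain'_infix hg.2.2.1 hxy⟩
  have hg' : GoodList (G.induce A) l u v :=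
    ⟨hg.1, fun x hx => by rw [SimpleGraph.Subgraph.induce_verts]; exact hmem x hx,
      hc', hg.2.2.2.1, hg.2.2.2.2⟩
  exact comp_mem_of_goodList h hg' hu

lemma infix_pair_append {x y : V} : ∀ {l₁ l₂ : List V}, [x, y] <:+: l₁ ++ l₂ →
    [x, y] <:+: l₁ ∨ [x, y] <:+: l₂ ∨ (l₁.getLast? = some x ∧ l₂.head? = some y)
  | [], _, h => Or.inr (Or.inl (by simpa using h))
  | a :: l₁, l₂, h => by
    rw [List.cons_append, List.infix_cons_iff] at h
    rcases h with h | h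
    · obtain ⟨t, ht⟩ := h
      have ht' : x :: y :: t = a :: (l₁ ++ l₂) := ht
      injection ht' with h1 h2
      subst h1
      cases l₁ with
      | nil =>
        simp only [List.nil_append] at h2
        refine Or.inr (Or.inr ⟨rfl, ?_⟩)
        rw [← h2]; rfl
      | cons c l₁' =>
        rw [List.cons_append] at h2
        injection h2 with h3 _
        subst h3
        exact Or.inl ⟨[], l₁', rfl⟩
    · rcases infix_pair_append h with h' | h' | ⟨h1, h2⟩
      · exact Or.inl (List.infix_cons h')
      · exact Or.inr (Or.inl h')
      · refine Or.inr (Or.inr ⟨?_, h2⟩)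
        obtain ⟨ys, hys⟩ := List.getLast?_eq_some_iff.mp h1
        rw [hys]
        exact List.getLast?_eq_some_iff.mpr ⟨a :: ys, by simp⟩

lemma goodList_split {H : Gr V} {l : List V} {u v : V} (hg : GoodList H l u v)
    (Apred : V → Prop) (hu : Apred u) (hv : ¬ Apred v) :
    ∃ la a₀ b₀, GoodList H la u a₀ ∧ (∀ x ∈ la, Apred x ∧ x ∈ l) ∧ H.Adj a₀ b₀ ∧
      ¬ Apred b₀ ∧ b₀ ∈ l := by
  classical
  obtain ⟨hn, hm, hc, hh, hl⟩ := hg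
  set p : V → Bool := fun x => decide (Apred x) with hp
  have hsplit : l.takeWhile p ++ l.dropWhile p = l := List.takeWhile_append_dropWhile
  have hdne : l.dropWhile p ≠ [] := by
    intro h0
    have hvl : v ∈ l := GoodList.last_mem ⟨hn, hm, hc, hh, hl⟩
    have : v ∈ l.takeWhile p := by
      rw [← hsplit, h0, List.append_nil] at hvl
      exact hvl
    exact hv (by simpa [hp] using List.mem_takeWhile_imp this)
  have htne : l.takeWhile p ≠ [] := by
    obtain ⟨t, ht⟩ := List.head?_eq_some_iff.mp hh
    rw [ht, List.takeWhile_cons_of_pos (by simp [hp, hu])]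
    simp
  obtain ⟨b₀, ld, hbd⟩ := List.exists_cons_of_ne_nil hdne
  have heq : l = l.takeWhile p ++ (b₀ :: ld) := by rw [← hbd, hsplit]
  have hmemA : ∀ x ∈ l.takeWhile p, Apred x := fun x hx => by
    simpa [hp] using List.mem_takeWhile_imp hx
  have hta : l.takeWhile p <:+: l := ⟨[], l.dropWhile p, by simpa using hsplit⟩
  have hsubl : ∀ x ∈ l.takeWhile p, x ∈ l := fun x hx => hta.subset hx
  have hheadt : (l.takeWhile p).head? = some u := by
    obtain ⟨t, ht⟩ := List.head?_eq_some_iff.mp hh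
    rw [ht, List.takeWhile_cons_of_pos (by simp [hp, hu])]
    rfl
  have hc' : Chain' H.Adj (l.takeWhile p ++ (b₀ :: ld)) := heq ▸ hc
  obtain ⟨hcta, hctd, hcross⟩ := List.isChain_append.mp hc'
  have hlastt : (l.takeWhile p).getLast? = some ((l.takeWhile p).getLast htne) :=
    List.getLast?_eq_getLast htne
  have hadj : H.Adj ((l.takeWhile p).getLast htne) b₀ := by
    apply hcross
    · rw [hlastt]; rfl
    · rfl
  have hb₀ : ¬ Apred b₀ := by
    have h5 := List.head_dropWhile_not p hdne
    have h6 : (l.dropWhile p).head? = some b₀ := by rw [hbd]; rfl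
    rw [List.head?_eq_head hdne] at h6
    rw [Option.some.inj h6] at h5
    simpa [hp] using h5
  refine ⟨l.takeWhile p, (l.takeWhile p).getLast htne, b₀,
    ⟨List.Nodup.sublist hta.sublist hn, fun x hx => hm x (hsubl x hx), hcta, hheadt, hlastt⟩,
    fun x hx => ⟨hmemA x hx, hsubl x hx⟩, hadj, hb₀, by rw [heq]; simp⟩

lemma bePath_cross {A B : Set V} {P : Gr V} (hdis : Disjoint A B) (hbe : IsBePath A B P)
    {a b : V} (hab : IsPathFrom P a b) (ha : a ∈ A) (hb : b ∈ B) :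
    ∃ ca cb la lb, ca ∈ A ∧ cb ∈ B ∧ P.Adj ca cb ∧
      GoodList P la a ca ∧ (∀ x ∈ la, x ∈ A) ∧
      GoodList P lb cb b ∧ (∀ x ∈ lb, x ∈ B) := by
  obtain ⟨hpg, hsub, ca, cb, hca, hcb, hPadj, huniq⟩ := hbe
  obtain ⟨l, hg⟩ := goodList_of_isPathFrom hab
  have hnAB : ∀ z, z ∈ A → z ∈ B → False := fun z h1 h2 => Set.disjoint_left.mp hdis h1 h2
  -- A side
  obtain ⟨la, a₀, b₀, hgla, hmemla, hadj1, hb₀, hb₀l⟩ :=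
    goodList_split hg (· ∈ A) ha (fun h => hnAB b h hb)
  have hb₀B : b₀ ∈ B := by
    rcases hsub (hg.2.1 b₀ hb₀l) with h | h
    · exact absurd h hb₀
    · exact h
  have ha₀A : a₀ ∈ A := (hmemla a₀ hgla.last_mem).1
  obtain ⟨he1, he2⟩ := huniq a₀ b₀ hadj1 ha₀A hb₀B
  -- B side (reverse)
  obtain ⟨lb', y₀, x₀, hglb, hmemlb, hadj2, hx₀, hx₀l⟩ :=
    goodList_split hg.reverse (· ∈ B) hb (fun h => hnAB a ha h)
  have hx₀A : x₀ ∈ A := by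
    rcases hsub (hg.reverse.2.1 x₀ hx₀l) with h | h
    · exact h
    · exact absurd h hx₀
  have hy₀B : y₀ ∈ B := (hmemlb y₀ hglb.last_mem).1
  obtain ⟨he3, he4⟩ := huniq x₀ y₀ hadj2.symm hx₀A hy₀B
  subst he1; subst he2
  refine ⟨a₀, b₀, la, lb'.reverse, ha₀A, hb₀B, hadj1, hgla,
    fun x hx => (hmemla x hx).1, ?_, fun x hx => (hmemlb x (by simpa using hx)).1⟩
  have := hglb.reverse
  rwa [he4] at this

lemma cross_of_joined {G GA GB : Gr V} {A B : Set V} {a b : V}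
    (hdis : Disjoint A B)
    (hGA : IsComponent (G.induce A) GA) (hGB : IsComponent (G.induce B) GB)
    (ha : a ∈ A) (hb : b ∈ B) (haA : a ∈ GA.verts) (hbB : b ∈ GB.verts)
    (h : BePathJoined G A B a b) :
    ∃ ca ∈ GA.verts, ∃ cb ∈ GB.verts, G.Adj ca cb := by
  obtain ⟨P, hPG, hbe, hpf⟩ := h
  obtain ⟨ca, cb, la, lb, hca, hcb, hPadj, hgla, hlaA, hglb, hlbB⟩ :=
    bePath_cross hdis hbe hpf ha hb
  have hglaG : GoodList G la a ca := hgla.mono hPG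
  have hglbG : GoodList G lb cb b := hglb.mono hPG
  have hcaA : ca ∈ GA.verts :=
    comp_mem_of_goodListG hGA hglaG hlaA haA ca hglaG.last_mem
  have hcbB : cb ∈ GB.verts := by
    have hrev := hglbG.reverse
    exact comp_mem_of_goodListG hGB hrev
      (fun x hx => hlbB x (by simpa using hx)) hbB cb hrev.last_mem
  exact ⟨ca, hcaA, cb, hcbB, hPG.2 hPadj⟩

lemma joined_of_cross {G GA GB : Gr V} {A B : Set V}
    (hdis : Disjoint A B)
    (hGA : IsComponent (G.induce A) GA) (hGB : IsComponent (G.induce B) GB)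
    (hcr : ∃ ca ∈ GA.verts, ∃ cb ∈ GB.verts, G.Adj ca cb)
    {a b : V} (haA : a ∈ GA.verts) (hbB : b ∈ GB.verts) :
    ∃ P, P ≤ G.induce (GA.verts ∪ GB.verts) ∧ IsBePath A B P ∧ IsPathFrom P a b := by
  obtain ⟨ca, hcaA, cb, hcbB, hadj⟩ := hcr
  have hA : GA.verts ⊆ A := comp_verts_subset hGA
  have hB : GB.verts ⊆ B := comp_verts_subset hGB
  have hnAB : ∀ z, z ∈ A → z ∈ B → False := fun z h1 h2 => Set.disjoint_left.mp hdis h1 h2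
  set C := GA.verts ∪ GB.verts with hC
  have hGAle : GA ≤ G.induce C := comp_le_induce hGA Set.subset_union_left
  have hGBle : GB ≤ G.induce C := comp_le_induce hGB Set.subset_union_right
  obtain ⟨la, hgla⟩ := goodList_of_rtg haA (connectedGr_iff.mp hGA.2.1 a ca haA hcaA)
  obtain ⟨lb, hglb⟩ := goodList_of_rtg hcbB (connectedGr_iff.mp hGB.2.1 cb b hcbB hbB)
  have hlaA1 : ∀ x ∈ la, x ∈ GA.verts := hgla.2.1
  have hlbB1 : ∀ x ∈ lb, x ∈ GB.verts := hglb.2.1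
  have hglaC : GoodList (G.induce C) la a ca := hgla.mono hGAle
  have hglbC : GoodList (G.induce C) lb cb b := hglb.mono hGBle
  have hadjC : (G.induce C).Adj ca cb := by
    rw [SimpleGraph.Subgraph.induce_adj]
    exact ⟨Or.inl hcaA, Or.inr hcbB, hadj⟩
  have hdisjl : la.Disjoint lb := fun x hx hx' =>
    hnAB x (hA (hlaA1 x hx)) (hB (hlbB1 x hx'))
  have hgl : GoodList (G.induce C) (la ++ lb) a b := hglaC.append hglbC hadjC hdisjl
  have hane : la ≠ [] := by
    intro h0; have := hgla.2.2.2.1; rw [h0] at this; simp at this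
  have hbne : lb ≠ [] := by
    intro h0; have := hglb.2.2.2.1; rw [h0] at this; simp at this
  have hlen : 2 ≤ (la ++ lb).length := by
    rw [List.length_append]
    have h1 : 1 ≤ la.length := List.length_pos_iff.mpr hane
    have h2 : 1 ≤ lb.length := List.length_pos_iff.mpr hbne
    omega
  have hpgon := pathGr_isPathGraphOn hgl.1 hlen
  refine ⟨pathGr (la ++ lb), pathGr_le hgl.2.1 hgl.2.2.1,
    ⟨⟨la ++ lb, hpgon⟩, ?_, ca, cb, hA hcaA, hB hcbB, ?_, ?_⟩,
    ⟨la ++ lb, hpgon, Or.inl ⟨hgl.2.2.2.1, hgl.2.2.2.2⟩⟩⟩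
  · intro x hx
    rcases List.mem_append.mp hx with h | h
    · exact Or.inl (hA (hlaA1 x h))
    · exact Or.inr (hB (hlbB1 x h))
  · refine ⟨fun h0 => hnAB ca (hA hcaA) (h0 ▸ hB hcbB), Or.inl ?_⟩
    obtain ⟨ys, hys⟩ := List.getLast?_eq_some_iff.mp hgla.2.2.2.2
    obtain ⟨t, ht⟩ := List.head?_eq_some_iff.mp hglb.2.2.2.1
    exact ⟨ys, t, by simp [hys, ht]⟩
  · rintro x y ⟨hne, hinf | hinf⟩ hxA hyB
    · rcases infix_pair_append hinf with h' | h' | ⟨h1, h2⟩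
      · exact absurd hyB (fun _ => hnAB y (hA (hlaA1 y (h'.subset (by simp)))) hyB)
      · exact absurd hxA (fun _ => hnAB x hxA (hB (hlbB1 x (h'.subset (by simp)))))
      · exact ⟨Option.some.inj (h1.symm.trans hgla.2.2.2.2),
          Option.some.inj (h2.symm.trans hglb.2.2.2.1)⟩
    · rcases infix_pair_append hinf with h' | h' | ⟨h1, h2⟩
      · exact absurd hyB (fun _ => hnAB y (hA (hlaA1 y (h'.subset (by simp)))) hyB)
      · exact absurd hxA (fun _ => hnAB x hxA (hB (hlbB1 x (h'.subset (by simp)))))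
      · have : y = ca := Option.some.inj (h1.symm.trans hgla.2.2.2.2)
        exact absurd hyB (fun _ => hnAB y (this ▸ hA hcaA) hyB)

lemma connected_of_cross {G GA GB : Gr V} {A B : Set V}
    (hGA : IsComponent (G.induce A) GA) (hGB : IsComponent (G.induce B) GB)
    (hcr : ∃ ca ∈ GA.verts, ∃ cb ∈ GB.verts, G.Adj ca cb) :
    ConnectedGr (G.induce (GA.verts ∪ GB.verts)) := by
  obtain ⟨ca, hcaA, cb, hcbB, hadj⟩ := hcr
  set C := GA.verts ∪ GB.verts with hC
  have hGAle : GA ≤ G.induce C := comp_le_induce hGA Set.subset_union_left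
  have hGBle : GB ≤ G.induce C := comp_le_induce hGB Set.subset_union_right
  have hadjC : (G.induce C).Adj ca cb := by
    rw [SimpleGraph.Subgraph.induce_adj]
    exact ⟨Or.inl hcaA, Or.inr hcbB, hadj⟩
  have hsym : Symmetric (G.induce C).Adj := fun x y h => h.symm
  have rA : ∀ x ∈ GA.verts, ReflTransGen (G.induce C).Adj x ca := fun x hx =>
    ReflTransGen.mono (show GA.Adj ≤ (G.induce C).Adj from fun a b hab => hGAle.2 hab) _ _ (connectedGr_iff.mp hGA.2.1 x ca hx hcaA)
  have rB : ∀ x ∈ GB.verts, ReflTransGen (G.induce C).Adj cb x := fun x hx =>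
    ReflTransGen.mono (show GB.Adj ≤ (G.induce C).Adj from fun a b hab => hGBle.2 hab) _ _ (connectedGr_iff.mp hGB.2.1 cb x hcbB hx)
  have step : ReflTransGen (G.induce C).Adj ca cb := ReflTransGen.single hadjC
  rw [connectedGr_iff]
  intro u v hu hv
  rw [SimpleGraph.Subgraph.induce_verts] at hu hv
  rcases hu with hu | hu <;> rcases hv with hv | hv
  · exact (rA u hu).trans (((@ReflTransGen.stdSymm _ _ ⟨fun _ _ h => hsym h⟩).symm _ _) (rA v hv))
  · exact (rA u hu).trans (step.trans (rB v hv))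
  · exact (((@ReflTransGen.stdSymm _ _ ⟨fun _ _ h => hsym h⟩).symm _ _) (rB u hu)).trans
      ((((@ReflTransGen.stdSymm _ _ ⟨fun _ _ h => hsym h⟩).symm _ _) step).trans
        (((@ReflTransGen.stdSymm _ _ ⟨fun _ _ h => hsym h⟩).symm _ _) (rA v hv)))
  · exact (((@ReflTransGen.stdSymm _ _ ⟨fun _ _ h => hsym h⟩).symm _ _) (rB u hu)).trans (rB v hv)

lemma cross_of_connected {G GA GB : Gr V} {A B : Set V} {a₁ b₁ : V}
    (hdis : Disjoint A B) (hAG : A ⊆ G.verts) (hBG : B ⊆ G.verts)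
    (hGA : IsComponent (G.induce A) GA) (hGB : IsComponent (G.induce B) GB)
    (ha₁ : a₁ ∈ A) (hb₁ : b₁ ∈ B) (haGA : a₁ ∈ GA.verts) (hbGB : b₁ ∈ GB.verts)
    (hconn : ConnectedGr (G.induce (GA.verts ∪ GB.verts))) :
    ∃ ca ∈ GA.verts, ∃ cb ∈ GB.verts, G.Adj ca cb := by
  set C := GA.verts ∪ GB.verts with hC
  have hA : GA.verts ⊆ A := comp_verts_subset hGA
  have hB : GB.verts ⊆ B := comp_verts_subset hGB
  have hnAB : ∀ z, z ∈ A → z ∈ B → False := fun z h1 h2 => Set.disjoint_left.mp hdis h1 h2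
  have hCsub : C ⊆ G.verts := Set.union_subset (hA.trans hAG) (hB.trans hBG)
  have haC : a₁ ∈ (G.induce C).verts := by
    rw [SimpleGraph.Subgraph.induce_verts]; exact Or.inl haGA
  have hbC : b₁ ∈ (G.induce C).verts := by
    rw [SimpleGraph.Subgraph.induce_verts]; exact Or.inr hbGB
  obtain ⟨l, hg⟩ := goodList_of_rtg haC (connectedGr_iff.mp hconn a₁ b₁ haC hbC)
  have hgG : GoodList G l a₁ b₁ := hg.mono (induce_le_self hCsub)
  obtain ⟨la, a₀, b₀, hgla, hmemla, hadj, hb₀, hb₀l⟩ :=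
    goodList_split hg (· ∈ A) ha₁ (fun h => hnAB b₁ h hb₁)
  have hmemA : ∀ x ∈ la, x ∈ A := fun x hx => (hmemla x hx).1
  have ha₀GA : a₀ ∈ GA.verts :=
    comp_mem_of_goodListG hGA (hgla.mono (induce_le_self hCsub)) hmemA haGA a₀ hgla.last_mem
  have hb₀GB : b₀ ∈ GB.verts := by
    have : b₀ ∈ C := by
      have := hg.2.1 b₀ hb₀l
      rwa [SimpleGraph.Subgraph.induce_verts] at this
    rcases this with h | h
    · exact absurd (hA h) hb₀
    · exact h
  refine ⟨a₀, ha₀GA, b₀, hb₀GB, ?_⟩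
  rw [SimpleGraph.Subgraph.induce_adj] at hadj
  exact hadj.2.2

end PBAux


theorem stmt5 {V : Type} (G : Gr V) (A B : Set V) (a₁ b₁ : V) (GA GB : Gr V)
    (hG : IsPathBipartite A B G) (ha₁ : a₁ ∈ A) (hb₁ : b₁ ∈ B)
    (hGA : IsComponent (G.induce A) GA) (haGA : a₁ ∈ GA.verts)
    (hGB : IsComponent (G.induce B) GB) (hbGB : b₁ ∈ GB.verts) :
    (BePathJoined G A B a₁ b₁ ↔ ConnectedGr (G.induce (GA.verts ∪ GB.verts))) ∧
    (BePathJoined G A B a₁ b₁ ↔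
      ∀ a ∈ GA.verts, ∀ b ∈ GB.verts, BePathJoined G A B a b) := by
  obtain ⟨hAne, hBne, hdis, hAG, hBG, -⟩ := hG
  have hCsub : GA.verts ∪ GB.verts ⊆ G.verts :=
    Set.union_subset ((comp_verts_subset hGA).trans hAG) ((comp_verts_subset hGB).trans hBG)
  have key1 : BePathJoined G A B a₁ b₁ → ∃ ca ∈ GA.verts, ∃ cb ∈ GB.verts, G.Adj ca cb :=
    cross_of_joined hdis hGA hGB ha₁ hb₁ haGA hbGB
  have key2 : (∃ ca ∈ GA.verts, ∃ cb ∈ GB.verts, G.Adj ca cb) →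
      ∀ a ∈ GA.verts, ∀ b ∈ GB.verts, BePathJoined G A B a b := by
    intro hcr a ha b hb
    obtain ⟨P, hle, hbe, hpf⟩ := joined_of_cross hdis hGA hGB hcr ha hb
    exact ⟨P, hle.trans (induce_le_self hCsub), hbe, hpf⟩
  constructor
  · constructor
    · intro h
      exact connected_of_cross hGA hGB (key1 h)
    · intro h
      exact key2 (cross_of_connected hdis hAG hBG hGA hGB ha₁ hb₁ haGA hbGB h) a₁ haGA b₁ hbGB
  · constructor
    · intro h
      exact key2 (key1 h)
    · intro h
      exact h a₁ haGA b₁ hbGB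
end

section
/- For every graph G, the following are equivalent: (1) there exist disjoint nonempty subsets A and B of V(G) such that G is a path-bipartite graph of A and B; (2) G has no isolated vertices. -/
open SimpleGraph Set

namespace Stmt9Aux

-- L1
lemma list_adj_exists {α : Type} {v : α} : ∀ {l : List α}, v ∈ l → 2 ≤ l.length →
    ∃ u, [v, u] <:+: l ∨ [u, v] <:+: l := by
  intro l
  induction l with
  | nil => simp
  | cons a t ih =>
    intro hv hlen
    rcases List.mem_cons.mp hv with rfl | hv
    · obtain ⟨u, t', rfl⟩ : ∃ u t', t = u :: t' := by
        cases t with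
        | nil => simp at hlen
        | cons u t' => exact ⟨u, t', rfl⟩
      exact ⟨u, Or.inl ⟨[], t', rfl⟩⟩
    · by_cases h2 : 2 ≤ t.length
      · obtain ⟨u, hu⟩ := ih hv h2
        refine ⟨u, hu.imp (fun h => h.trans (List.suffix_cons a t).isInfix)
          (fun h => h.trans (List.suffix_cons a t).isInfix)⟩
      · match t, hv with
        | [w], hv =>
          have : v = w := by simpa using hv
          subst this
          exact ⟨a, Or.inr (List.infix_refl _)⟩
        | w :: s :: t', hv => exact absurd (by simp) h2

lemma prefix_pair {α : Type} {w b a : α} {t : List α} (h : [w, b] <+: a :: t) :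
    w = a ∧ ∃ r, t = b :: r := by
  obtain ⟨r, hr⟩ := h
  simp only [List.cons_append, List.nil_append] at hr
  cases hr
  exact ⟨rfl, r, rfl⟩

-- L2
lemma pred_unique {α : Type} {b u u' : α} : ∀ {l : List α}, l.Nodup →
    [u, b] <:+: l → [u', b] <:+: l → u = u' := by
  intro l
  induction l with
  | nil => intro _ h _; exact absurd (h.subset (show u ∈ [u, b] by simp)) List.not_mem_nil
  | cons a t ih =>
    intro hnd h1 h2
    rw [List.nodup_cons] at hnd
    have aux : ∀ w r, [w, b] <:+: b :: r → (b :: r).Nodup → False := by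
      intro w r h hn
      rw [List.nodup_cons] at hn
      rcases List.infix_cons_iff.mp h with hp | hi
      · obtain ⟨rfl, r', rfl⟩ := prefix_pair hp
        exact hn.1 (by simp)
      · exact hn.1 (hi.subset (by simp))
    rcases List.infix_cons_iff.mp h1 with hp1 | hi1
    · obtain ⟨rfl, r, rfl⟩ := prefix_pair hp1
      rcases List.infix_cons_iff.mp h2 with hp2 | hi2
      · exact ((prefix_pair hp2).1).symm
      · exact absurd (aux u' r hi2 hnd.2) id
    · rcases List.infix_cons_iff.mp h2 with hp2 | hi2
      · obtain ⟨rfl, r, rfl⟩ := prefix_pair hp2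
        exact absurd (aux u r hi1 hnd.2) id
      · exact ih hnd.2 hi1 hi2

-- L3
lemma not_infix_getLast {α : Type} {b u : α} {l : List α} (hnd : l.Nodup)
    (hl : l.getLast? = some b) : ¬ [b, u] <:+: l := by
  rintro ⟨s, t, rfl⟩
  have hl2 : ((s ++ [b]) ++ (u :: t)).getLast? = some b := by simpa using hl
  rw [List.getLast?_append_of_ne_nil _ (by simp)] at hl2
  have hmem : b ∈ u :: t := List.mem_of_mem_getLast? hl2
  have : (b :: (u :: t)).Nodup := by
    have h' := hnd
    simp only [List.append_assoc] at h'
    simpa using (List.nodup_append.mp h').2.1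
  rw [List.nodup_cons] at this
  exact this.1 hmem

-- L4
lemma exists_penult {α : Type} {b : α} {l : List α} (h2 : 2 ≤ l.length)
    (hl : l.getLast? = some b) : ∃ u, [u, b] <:+: l := by
  have hd : l.dropLast ++ [b] = l := List.dropLast_append_getLast? b hl
  have hne : l.dropLast ≠ [] := by
    intro h
    have := congrArg List.length hd
    rw [h] at this
    simp at this
    omega
  have hu' : l.dropLast.getLast? ≠ none := by
    exact fun hc => hne (List.getLast?_eq_none_iff.mp hc)
  obtain ⟨u, hu⟩ := Option.ne_none_iff_exists'.mp hu'
  have h3 : l.dropLast.dropLast ++ [u] = l.dropLast := List.dropLast_append_getLast? u hu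
  refine ⟨u, l.dropLast.dropLast, [], ?_⟩
  rw [← hd, ← h3]
  simp

end Stmt9Aux

namespace Stmt9Aux2
variable {V : Type}

def mkPath (l : List V) (hnd : l.Nodup) : Gr V where
  verts := {v | v ∈ l}
  Adj x y := [x, y] <:+: l ∨ [y, x] <:+: l
  adj_sub := by
    rintro x y (h | h)
    · have h2 : ([x, y] : List V).Nodup := hnd.sublist h.sublist
      simp only [SimpleGraph.top_adj]
      simpa using h2
    · have h2 : ([y, x] : List V).Nodup := hnd.sublist h.sublist
      simp only [SimpleGraph.top_adj]
      have : y ≠ x := by simpa using h2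
      exact this.symm
  edge_vert := by
    rintro x y (h | h)
    · exact h.subset (by simp)
    · exact h.subset (by simp)
  symm := ⟨by rintro x y (h | h); exacts [Or.inr h, Or.inl h]⟩

lemma getLast?_cons_ne {α : Type} {a : α} {l : List α} (h : l ≠ []) :
    (a :: l).getLast? = l.getLast? := by
  cases l with
  | nil => exact absurd rfl h
  | cons b t => exact List.getLast?_cons_cons

lemma support_getLast? {H : SimpleGraph V} {u v : V} (p : H.Walk u v) :
    p.support.getLast? = some v := by
  rw [List.getLast?_eq_getLast_of_ne_nil p.support_ne_nil]
  exact congrArg some (p.getLast_support)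

lemma reach_of_mem_support {H : SimpleGraph V} [DecidableEq V] {u v w : V} (p : H.Walk u v)
    (hw : w ∈ p.support) : H.Reachable w v := ⟨p.dropUntil w hw⟩

lemma exists_good_list (H : SimpleGraph V) [DecidableEq V] {x y b : V} (hxy : H.Adj x y)
    (hb : H.Reachable y b) :
    ∃ l : List V, l.Nodup ∧ 2 ≤ l.length ∧ ([x, y] <:+: l ∨ [y, x] <:+: l) ∧
      l.getLast? = some b ∧ List.Chain' H.Adj l ∧ ∀ v ∈ l, H.Reachable v b := by
  obtain ⟨p0⟩ := hb
  set q : H.Walk y b := p0.toPath.1 with hqdef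
  have hq : q.IsPath := p0.toPath.2
  by_cases hx : x ∈ q.support
  · set r := q.dropUntil x hx with hrdef
    have hr : r.IsPath := hq.dropUntil hx
    have hynotin : y ∉ r.support := by
      intro hy
      have hy' : y ∈ r.support.tail := by
        rw [r.support_eq_cons] at hy
        rcases List.mem_cons.mp hy with hy | hy
        · exact absurd hy.symm hxy.ne
        · exact hy
      have hspec := q.take_spec hx
      have hnodsup : q.support.Nodup := hq.support_nodup
      rw [← hspec, SimpleGraph.Walk.support_append] at hnodsup
      have hdisj := (List.nodup_append'.mp hnodsup).2.2
      exact hdisj ((q.takeUntil x hx).start_mem_support) hy'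
    refine ⟨y :: r.support, ?_, ?_, ?_, ?_, ?_, ?_⟩
    · exact List.nodup_cons.mpr ⟨hynotin, hr.support_nodup⟩
    · have := r.support_ne_nil
      cases hsup : r.support with
      | nil => exact absurd hsup this
      | cons c t => simp [hsup]
    · refine Or.inr ?_
      rw [r.support_eq_cons]
      exact (show [y, x] <+: y :: x :: r.support.tail from ⟨r.support.tail, rfl⟩).isInfix
    · rw [getLast?_cons_ne r.support_ne_nil]
      exact support_getLast? r
    · rw [r.support_eq_cons]
      exact List.isChain_cons_cons.mpr ⟨hxy.symm, by rw [← r.support_eq_cons]; exact r.isChain_adj_support⟩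
    · intro v hv
      rcases List.mem_cons.mp hv with rfl | hv
      · exact ⟨p0⟩
      · exact reach_of_mem_support r hv
  · refine ⟨x :: q.support, ?_, ?_, ?_, ?_, ?_, ?_⟩
    · exact List.nodup_cons.mpr ⟨hx, hq.support_nodup⟩
    · have := q.support_ne_nil
      cases hsup : q.support with
      | nil => exact absurd hsup this
      | cons c t => simp [hsup]
    · refine Or.inl ?_
      rw [q.support_eq_cons]
      exact (show [x, y] <+: x :: y :: q.support.tail from ⟨q.support.tail, rfl⟩).isInfix
    · rw [getLast?_cons_ne q.support_ne_nil]
      exact support_getLast? q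
    · rw [q.support_eq_cons]
      exact List.isChain_cons_cons.mpr ⟨hxy, by rw [← q.support_eq_cons]; exact q.isChain_adj_support⟩
    · intro v hv
      rcases List.mem_cons.mp hv with rfl | hv
      · exact ⟨SimpleGraph.Walk.cons hxy q⟩
      · exact reach_of_mem_support q hv

end Stmt9Aux2

open Stmt9Aux Stmt9Aux2

theorem stmt9 {V : Type} (G : Gr V) (hne : G.verts.Nonempty) :
    (∃ A B : Set V, IsPathBipartite A B G) ↔ (∀ v ∈ G.verts, ∃ u, G.Adj v u) := by
  classical
  constructor
  · rintro ⟨A, B, hA, hB, hdisj, hAv, hBv, Ps, hPsne, hbe, rfl⟩ v hv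
    have hv' : v ∈ ⋃ P ∈ Ps, SimpleGraph.Subgraph.verts P := hv
    simp only [Set.mem_iUnion] at hv'
    obtain ⟨P, hP, hvP⟩ := hv'
    obtain ⟨l, hnd, hlen, hverts, hadj⟩ := (hbe P hP).1
    have hvl : v ∈ l := by rw [hverts] at hvP; exact hvP
    obtain ⟨u, hu⟩ := list_adj_exists hvl hlen
    exact ⟨u, (le_sSup hP).2 ((hadj v u).mpr hu)⟩
  · intro h
    set H := G.spanningCoe with hH
    have hHadj : ∀ u v : V, H.Adj u v ↔ G.Adj u v := fun _ _ => Iff.rfl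
    set rep : V → V := fun v => (H.connectedComponentMk v).out with hrepdef
    have hrep_reach : ∀ v, H.Reachable (rep v) v := fun v =>
      SimpleGraph.ConnectedComponent.eq.mp ((H.connectedComponentMk v).out_eq)
    have hrep_eq : ∀ u v, H.Reachable u v → rep u = rep v := by
      intro u v huv
      show (H.connectedComponentMk u).out = (H.connectedComponentMk v).out
      rw [SimpleGraph.ConnectedComponent.eq.mpr huv]
    set B : Set V := rep '' G.verts with hBdef
    set A : Set V := G.verts \ B with hAdef
    have hreach_mem : ∀ u v : V, H.Reachable u v → v ∈ G.verts → u ∈ G.verts := by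
      intro u v hr hv
      obtain ⟨w⟩ := hr
      cases w with
      | nil => exact hv
      | cons ha p => exact G.edge_vert ha
    have hBsub : B ⊆ G.verts := by
      rintro _ ⟨v, hv, rfl⟩
      exact hreach_mem _ _ (hrep_reach v) hv
    have hBunique : ∀ w ∈ B, ∀ x, H.Reachable w x → w = rep x := by
      rintro _ ⟨v, hv, rfl⟩ x hwx
      have h1 : rep (rep v) = rep v := hrep_eq _ _ (hrep_reach v)
      have h2 : rep (rep v) = rep x := hrep_eq _ _ hwx
      rw [← h1, h2]
    have key : ∀ x y : V, G.Adj x y → ∃ P, P ≤ G ∧ IsBePath A B P ∧ P.Adj x y := by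
      intro x y hxy
      have hxv : x ∈ G.verts := G.edge_vert hxy
      have hyv : y ∈ G.verts := G.edge_vert hxy.symm
      have hHxy : H.Adj x y := hxy
      have hyb : H.Reachable y (rep x) := hHxy.symm.reachable.trans (hrep_reach x).symm
      obtain ⟨l, hnd, hlen, hinf, hlast, hchain, hreach⟩ := exists_good_list H hHxy hyb
      have hbB : rep x ∈ B := ⟨x, hxv, rfl⟩
      have hbv : rep x ∈ G.verts := hBsub hbB
      have hlv : ∀ v ∈ l, v ∈ G.verts := fun v hv =>
        hreach_mem _ _ (hreach v hv) hbv
      have hPadj : ∀ u w : V, (mkPath l hnd).Adj u w → G.Adj u w := by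
        rintro u w (hh | hh)
        · have := hchain.infix hh
          exact (List.isChain_cons_cons.mp this).1
        · have := hchain.infix hh
          exact ((List.isChain_cons_cons.mp this).1 : H.Adj w u).symm
      have honly : ∀ w ∈ l, w ∈ B → w = rep x := by
        intro w hw hwB
        exact hBunique w hwB x ((hreach w hw).trans (hrep_reach x))
      refine ⟨mkPath l hnd, ⟨?_, hPadj⟩, ⟨⟨l, hnd, hlen, rfl, fun _ _ => Iff.rfl⟩, ?_, ?_⟩, hinf⟩
      · exact hlv
      · intro v hv
        by_cases hvB : v ∈ B
        · exact Or.inr hvB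
        · exact Or.inl ⟨hlv v hv, hvB⟩
      · obtain ⟨a₀, ha₀⟩ := exists_penult hlen hlast
        have ha₀l : a₀ ∈ l := ha₀.subset (by simp)
        have ha₀ne : a₀ ≠ rep x := by
          have : ([a₀, rep x] : List V).Nodup := hnd.sublist ha₀.sublist
          simpa using this
        have ha₀A : a₀ ∈ A := by
          refine ⟨hlv a₀ ha₀l, fun hB' => ha₀ne (honly a₀ ha₀l hB')⟩
        refine ⟨a₀, rep x, ha₀A, hbB, Or.inl ha₀, ?_⟩
        intro u w hadj huA hwB
        have hwl : w ∈ l := by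
          rcases hadj with hh | hh
          · exact hh.subset (by simp)
          · exact hh.subset (by simp)
        have hw : w = rep x := honly w hwl hwB
        subst hw
        rcases hadj with hh | hh
        · exact ⟨pred_unique hnd hh ha₀, rfl⟩
        · exact absurd hh (not_infix_getLast hnd hlast)
    obtain ⟨v0, hv0⟩ := hne
    obtain ⟨u0, hu0⟩ := h v0 hv0
    have hu0v : u0 ∈ G.verts := G.edge_vert hu0.symm
    have hne0 : v0 ≠ u0 := (G.adj_sub hu0).ne
    have hAne : A.Nonempty := by
      by_cases hc : v0 = rep v0
      · refine ⟨u0, hu0v, fun hB' => ?_⟩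
        have hr : H.Reachable u0 v0 := ((hHadj u0 v0).mpr hu0.symm).reachable
        have : u0 = rep v0 := hBunique u0 hB' v0 hr
        exact hne0 (hc.trans this.symm)
      · exact ⟨v0, hv0, fun hB' => hc (hBunique v0 hB' v0 (SimpleGraph.Reachable.refl v0))⟩
    refine ⟨A, B, hAne, ⟨rep v0, v0, hv0, rfl⟩, Set.disjoint_sdiff_left, Set.diff_subset, hBsub,
      {P | P ≤ G ∧ IsBePath A B P}, ?_, fun P hP => hP.2, ?_⟩
    · obtain ⟨P, hle, hbp, _⟩ := key v0 u0 hu0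
      exact ⟨P, hle, hbp⟩
    · apply le_antisymm
      · refine ⟨?_, ?_⟩
        · intro v hv
          obtain ⟨u, hu⟩ := h v hv
          obtain ⟨P, hle, hbp, hPadj⟩ := key v u hu
          have hPmem : P ∈ {P : Gr V | P ≤ G ∧ IsBePath A B P} := ⟨hle, hbp⟩
          exact (le_sSup hPmem).1 (P.edge_vert hPadj)
        · intro v w hvw
          obtain ⟨P, hle, hbp, hPadj⟩ := key v w hvw
          have hPmem : P ∈ {P : Gr V | P ≤ G ∧ IsBePath A B P} := ⟨hle, hbp⟩
          exact (le_sSup hPmem).2 hPadj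
      · exact sSup_le fun P hP => hP.1
end

section
/- For every path-bipartite graph G of disjoint nonempty sets A and B, there exists a metric d on X = V(G) such that G is path-proximinal for A and B with respect to d. In particular, the metric defined by d(x,y) = 0 if x = y, d(x,y) = 1 if {x,y} ∈ E(G), and d(x,y) = 2 otherwise works: it is a metric, A and B are proximinal in (X,d), dist(A,B) = 1, and for distinct x, y: {x,y} ∈ E(G) iff d(x,y) ≤ dist(A,B). -/
open SimpleGraph Set

open Classical in
theorem stmt14 {X : Type} (A B : Set X) (G : Gr X)
    (hG : IsPathBipartite A B G) (hV : G.verts = Set.univ) :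
    ∀ d₀ : X → X → ℝ,
      (d₀ = fun x y => if x = y then 0 else if G.Adj x y then 1 else 2) →
      ((∃ d : X → X → ℝ, IsMetric d ∧ IsPathProximinal d A B G) ∧
        IsMetric d₀ ∧ ProximinalSet d₀ A ∧ ProximinalSet d₀ B ∧
        setDist d₀ A B = 1 ∧
        (∀ x y : X, x ≠ y → (G.Adj x y ↔ d₀ x y ≤ setDist d₀ A B)) ∧
        IsPathProximinal d₀ A B G) := by
  intro d₀ hd₀
  obtain ⟨hA, hB, hAB, hAV, hBV, Ps, ⟨P, hPmem⟩, hPs, hGsup⟩ := hG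
  obtain ⟨-, -, a₀, b₀, ha₀, hb₀, hadjP, -⟩ := hPs P hPmem
  have hPG : P ≤ G := hGsup ▸ le_sSup hPmem
  have hadj : G.Adj a₀ b₀ := hPG.2 hadjP
  have hne₀ : a₀ ≠ b₀ := fun h => Set.disjoint_left.mp hAB ha₀ (h ▸ hb₀)
  have hdself : ∀ x, d₀ x x = 0 := by intro x; simp [hd₀]
  have hdadj : ∀ x y, x ≠ y → G.Adj x y → d₀ x y = 1 := by
    intro x y h1 h2; simp [hd₀, h1, h2]
  have hdnadj : ∀ x y, x ≠ y → ¬ G.Adj x y → d₀ x y = 2 := by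
    intro x y h1 h2; simp [hd₀, h1, h2]
  have hvals : ∀ x y, x ≠ y → d₀ x y = 1 ∨ d₀ x y = 2 := by
    intro x y h
    by_cases ha : G.Adj x y
    · exact Or.inl (hdadj x y h ha)
    · exact Or.inr (hdnadj x y h ha)
  have hnonneg : ∀ x y, 0 ≤ d₀ x y := by
    intro x y
    by_cases h : x = y
    · subst h; rw [hdself]
    · rcases hvals x y h with h' | h' <;> rw [h'] <;> norm_num
  have hsymm : ∀ x y, d₀ x y = d₀ y x := by
    intro x y
    by_cases h : x = y
    · subst h; rfl
    · simp [hd₀, h, Ne.symm h, SimpleGraph.Subgraph.adj_comm]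
  have hzero : ∀ x y, d₀ x y = 0 ↔ x = y := by
    intro x y
    constructor
    · intro h
      by_contra hne
      rcases hvals x y hne with h' | h' <;> rw [h'] at h <;> norm_num at h
    · intro h; subst h; exact hdself x
  have hmetric : IsMetric d₀ := by
    refine ⟨⟨hnonneg, hsymm, hzero⟩, ?_⟩
    intro x y z
    by_cases hxy : x = y
    · subst hxy; rw [hdself]
      have h1 := hnonneg x z; have h2 := hnonneg z x; linarith
    by_cases hxz : x = z
    · subst hxz; rw [hdself, zero_add]
    by_cases hzy : z = y
    · subst hzy; rw [hdself z, add_zero]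
    have h1 : 1 ≤ d₀ x z := by rcases hvals x z hxz with h | h <;> rw [h] <;> norm_num
    have h2 : 1 ≤ d₀ z y := by rcases hvals z y hzy with h | h <;> rw [h] <;> norm_num
    have h3 : d₀ x y ≤ 2 := by rcases hvals x y hxy with h | h <;> rw [h] <;> norm_num
    linarith
  have key : ∀ (S : Set ℝ) (c : ℝ), c ∈ S → (∀ r ∈ S, c ≤ r) → sInf S = c :=
    fun S c hc hlb => le_antisymm (csInf_le ⟨c, hlb⟩ hc) (le_csInf ⟨c, hc⟩ hlb)
  have hdist : setDist d₀ A B = 1 := by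
    apply key
    · exact ⟨a₀, ha₀, b₀, hb₀, hdadj _ _ hne₀ hadj⟩
    · rintro r ⟨a, ha, b, hb, rfl⟩
      have hne : a ≠ b := fun h => Set.disjoint_left.mp hAB ha (h ▸ hb)
      rcases hvals a b hne with h | h <;> rw [h] <;> norm_num
  have hprox : ∀ C : Set X, C.Nonempty → ProximinalSet d₀ C := by
    intro C hC x
    by_cases hx : x ∈ C
    · refine ⟨x, hx, ?_⟩
      rw [hdself]
      symm
      apply key
      · exact ⟨x, rfl, x, hx, hdself x⟩
      · rintro r ⟨a, ha, b, hb, rfl⟩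
        exact hnonneg a b
    · by_cases hE : ∃ a ∈ C, G.Adj x a
      · obtain ⟨a, haC, hxa⟩ := hE
        have hne : x ≠ a := fun h => hx (h ▸ haC)
        refine ⟨a, haC, ?_⟩
        rw [hdadj x a hne hxa]
        symm
        apply key
        · exact ⟨x, rfl, a, haC, hdadj x a hne hxa⟩
        · rintro r ⟨c, hc, b, hb, rfl⟩
          cases hc
          have hne' : x ≠ b := fun h => hx (h ▸ hb)
          rcases hvals x b hne' with h | h <;> rw [h] <;> norm_num
      · obtain ⟨a, haC⟩ := hC
        have hne : x ≠ a := fun h => hx (h ▸ haC)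
        refine ⟨a, haC, ?_⟩
        rw [hdnadj x a hne (fun h => hE ⟨a, haC, h⟩)]
        symm
        apply key
        · exact ⟨x, rfl, a, haC, hdnadj x a hne (fun h => hE ⟨a, haC, h⟩)⟩
        · rintro r ⟨c, hc, b, hb, rfl⟩
          cases hc
          have hne' : x ≠ b := fun h => hx (h ▸ hb)
          rw [hdnadj x b hne' (fun h => hE ⟨b, hb, h⟩)]
  have hiff : ∀ x y : X, x ≠ y → (G.Adj x y ↔ d₀ x y ≤ setDist d₀ A B) := by
    intro x y hxy
    rw [hdist]
    constructor
    · intro h; rw [hdadj x y hxy h]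
    · intro h
      by_contra hn
      rw [hdnadj x y hxy hn] at h
      norm_num at h
  have hpb : IsPathBipartite A B G := ⟨hA, hB, hAB, hAV, hBV, Ps, ⟨P, hPmem⟩, hPs, hGsup⟩
  have hpp : IsPathProximinal d₀ A B G :=
    ⟨hpb, hprox A hA, hprox B hB, fun x _ y _ hxy => hiff x y hxy⟩
  exact ⟨⟨d₀, hmetric, hpp⟩, hmetric, hprox A hA, hprox B hB, hdist, hiff, hpp⟩
end

section
/- For every graph G the following are equivalent: (1) G has no isolated vertices; (2) G is path-proximinal for some semimetric space; (3) G is path-proximinal for some metric space. -/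
open SimpleGraph Set

section AuxLemmas

variable {V : Type}

theorem exists_infix_pair : ∀ {l : List V} {v : V}, v ∈ l → 2 ≤ l.length →
    ∃ u, [v,u] <:+: l ∨ [u,v] <:+: l
  | [], v, hv, _ => by simp at hv
  | [a], v, hv, hl => by simp at hl
  | a :: b :: t, v, hv, _ => by
    rcases List.mem_cons.mp hv with rfl | hv'
    · exact ⟨b, Or.inl ⟨[], t, rfl⟩⟩
    · match t, hv' with
      | [], hv' => simp at hv'; subst hv'; exact ⟨a, Or.inr (List.infix_refl _)⟩
      | c :: t', hv' =>
        obtain ⟨u, hu⟩ := exists_infix_pair hv' (by simp)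
        exact ⟨u, hu.imp (fun h => h.trans (List.infix_cons (List.infix_refl _)))
          (fun h => h.trans (List.infix_cons (List.infix_refl _)))⟩

theorem pred_unique {l : List V} (hn : l.Nodup) {u a b : V}
    (h1 : [u,b] <:+: l) (h2 : [a,b] <:+: l) : u = a := by
  haveI : DecidableEq V := Classical.decEq V
  obtain ⟨s, t, e1⟩ := h1
  obtain ⟨s', t', e2⟩ := h2
  simp only [List.append_assoc, List.cons_append, List.nil_append] at e1 e2
  subst e1
  have hn2 := e2 ▸ hn
  have d1 := List.disjoint_of_nodup_append (by simpa using hn : (s ++ (u :: b :: t)).Nodup)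
  have d2 := List.disjoint_of_nodup_append (by simpa using hn2 : (s' ++ (a :: b :: t')).Nodup)
  have hbs : b ∉ s := fun hb => d1 hb (by simp)
  have hbs' : b ∉ s' := fun hb => d2 hb (by simp)
  have hbu : u ≠ b := by
    have := (List.nodup_append.mp (by simpa using hn : (s ++ (u :: b :: t)).Nodup)).2.1
    simp at this; exact this.1.1
  have hba : a ≠ b := by
    have := (List.nodup_append.mp (by simpa using hn2 : (s' ++ (a :: b :: t')).Nodup)).2.1
    simp at this; exact this.1.1
  have i1 : (s ++ u :: b :: t).idxOf b = s.length + 1 := by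
    rw [List.idxOf_append_of_notMem hbs, List.idxOf_cons_ne _ (Ne.symm hbu).symm,
      List.idxOf_cons_self]
  have i2 : (s' ++ a :: b :: t').idxOf b = s'.length + 1 := by
    rw [List.idxOf_append_of_notMem hbs', List.idxOf_cons_ne _ (Ne.symm hba).symm,
      List.idxOf_cons_self]
  rw [e2] at i2
  have hlen : s.length = s'.length := by omega
  obtain ⟨h, h'⟩ := List.append_inj e2.symm hlen
  simpa using congrArg List.head? h'

theorem not_infix_after_last {l : List V} (hn : l.Nodup) {b u : V}
    (hlast : l.getLast? = some b) (hinf : [b,u] <:+: l) : False := by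
  obtain ⟨s, t, e⟩ := hinf
  subst e
  have h1 : (s ++ [b,u] ++ t).getLast? = (u :: t).getLast? := by
    rw [show s ++ [b,u] ++ t = (s ++ [b]) ++ (u :: t) by simp, List.getLast?_append_cons]
  rw [h1] at hlast
  have hbmem : b ∈ u :: t := by
    obtain ⟨h, rfl⟩ := List.mem_getLast?_eq_getLast hlast
    exact List.getLast_mem h
  have hn' : (b :: (u :: t)).Nodup :=
    ((List.nodup_append.mp (by simpa using hn : (s ++ (b :: u :: t)).Nodup)).2.1 :)
  exact (List.nodup_cons.mp hn').1 hbmem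

theorem exists_last_pair : ∀ {l : List V} {b : V}, 2 ≤ l.length → l.getLast? = some b →
    ∃ a, [a, b] <:+ l
  | [], b, hl, _ => by simp at hl
  | [x], b, hl, _ => by simp at hl
  | x :: y :: t, b, hl, hlast => by
    match t, hlast with
    | [], hlast => simp at hlast; exact ⟨x, hlast ▸ List.suffix_refl _⟩
    | c :: t', hlast =>
      have h2 : (y :: c :: t').getLast? = some b := by
        rw [show x :: y :: c :: t' = [x] ++ (y :: c :: t') by simp,
          List.getLast?_append_cons] at hlast
        exact hlast
      have ⟨a, ha⟩ := exists_last_pair (by simp) h2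
      exact ⟨a, ha.trans (List.suffix_cons _ _)⟩

/-- The path subgraph determined by a duplicate-free list. -/
def pathOfList (l : List V) (hl : l.Nodup) : Gr V where
  verts := {v | v ∈ l}
  Adj x y := [x,y] <:+: l ∨ [y,x] <:+: l
  adj_sub := by
    rintro x y (h|h) <;>
    · have := hl.sublist h.sublist
      simp at this ⊢
      first
        | exact this
        | exact Ne.symm this
  edge_vert := by
    rintro x y (h|h)
    · exact h.sublist.subset (by simp)
    · exact h.sublist.subset (by simp)
  symm := by
    refine ⟨?_⟩; rintro x y (h|h)
    · exact Or.inr h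
    · exact Or.inl h

theorem isPathGraphOn_pathOfList (l : List V) (hl : l.Nodup) (h2 : 2 ≤ l.length) :
    IsPathGraphOn l (pathOfList l hl) := ⟨hl, h2, rfl, fun _ _ => Iff.rfl⟩

theorem pathOfList_le (G : Gr V) (hV : G.verts = Set.univ)
    {u v : V} (w : G.spanningCoe.Walk u v) (hw : w.support.Nodup) :
    pathOfList w.support hw ≤ G := by
  constructor
  · rw [hV]; exact Set.subset_univ _
  · rintro x y (h|h)
    · exact (List.isChain_pair.mp (w.isChain_adj_support.infix h) : G.spanningCoe.Adj x y)
    · exact ((List.isChain_pair.mp (w.isChain_adj_support.infix h)) : G.spanningCoe.Adj y x).symm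

theorem isBePath_of_walk (G : Gr V) (rep : V → V)
    (hcomp : ∀ u v, G.spanningCoe.Reachable u v → rep u = rep v)
    {u b : V} (w : G.spanningCoe.Walk u b) (hw : w.IsPath) (h2 : 2 ≤ w.support.length)
    (hb : rep b = b) :
    IsBePath {v | rep v ≠ v} {v | rep v = v} (pathOfList w.support hw.support_nodup) := by
  haveI : DecidableEq V := Classical.decEq V
  have hAll : ∀ v ∈ w.support, rep v = b := by
    intro v hv
    have : G.spanningCoe.Reachable v b := ⟨w.dropUntil v hv⟩
    rw [hcomp v b this, hb]
  have hlast : w.support.getLast? = some b := by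
    rw [List.getLast?_eq_getLast_of_ne_nil w.support_ne_nil]
    exact congrArg some (w.getLast_support)
  obtain ⟨a₀, hsuf⟩ := exists_last_pair h2 hlast
  have ha₀mem : a₀ ∈ w.support := hsuf.sublist.subset (by simp)
  have ha₀b : a₀ ≠ b := by
    have := hw.support_nodup.sublist hsuf.sublist
    simp at this; exact this
  refine ⟨⟨w.support, isPathGraphOn_pathOfList _ _ h2⟩, ?_, a₀, b, ?_, hb, Or.inl hsuf.isInfix, ?_⟩
  · intro v _
    by_cases h : rep v = v
    · exact Or.inr h
    · exact Or.inl h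
  · show rep a₀ ≠ a₀
    rw [hAll a₀ ha₀mem]; exact fun e => ha₀b e.symm
  · rintro x y hadj hxA hyB
    have hymem : y ∈ w.support := (pathOfList _ hw.support_nodup).edge_vert hadj.symm
    have hyb : y = b := by rw [← (hyB : rep y = y), hAll y hymem]
    subst hyb
    rcases hadj with h | h
    · exact ⟨pred_unique hw.support_nodup h hsuf.isInfix, rfl⟩
    · exact absurd h (fun h => not_infix_after_last hw.support_nodup hlast h)

theorem walk_construct (G : Gr V) (rep : V → V)
    (hrep : ∀ v, G.spanningCoe.Reachable v (rep v))
    {x y : V} (hxy : G.Adj x y) :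
    ∃ (u : V) (w : G.spanningCoe.Walk u (rep x)), w.IsPath ∧ 2 ≤ w.support.length ∧
      ([x,y] <:+: w.support ∨ [y,x] <:+: w.support) := by
  haveI : DecidableEq V := Classical.decEq V
  have hne : x ≠ y := fun e => (by simpa using G.adj_sub hxy : x ≠ y) e
  have hxy' : G.spanningCoe.Adj x y := hxy
  obtain ⟨p0⟩ := hrep x
  let q : G.spanningCoe.Walk x (rep x) := p0.toPath.1
  have hq : q.IsPath := p0.toPath.2
  by_cases hy : y ∈ q.support
  · have hsupp : q.support = (q.takeUntil y hy).support ++ (q.dropUntil y hy).support.tail := by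
      rw [← SimpleGraph.Walk.support_append, q.take_spec hy]
    have hnd := hq.support_nodup
    rw [hsupp] at hnd
    have hxtail : x ∉ (q.dropUntil y hy).support.tail :=
      fun hx => (List.disjoint_of_nodup_append hnd) ((q.takeUntil y hy).start_mem_support) hx
    have hxdrop : x ∉ (q.dropUntil y hy).support := by
      rw [SimpleGraph.Walk.support_eq_cons]
      simp only [List.mem_cons, not_or]
      exact ⟨hne, hxtail⟩
    refine ⟨x, SimpleGraph.Walk.cons hxy' (q.dropUntil y hy), (hq.dropUntil hy).cons hxdrop, ?_, ?_⟩
    · rw [SimpleGraph.Walk.support_cons]; simp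
    · left
      refine ⟨[], (q.dropUntil y hy).support.tail, ?_⟩
      rw [SimpleGraph.Walk.support_cons, SimpleGraph.Walk.support_eq_cons (q.dropUntil y hy)]
      simp
  · refine ⟨y, SimpleGraph.Walk.cons hxy'.symm q, hq.cons hy, ?_, ?_⟩
    · rw [SimpleGraph.Walk.support_cons]; simp
    · right
      refine ⟨[], q.support.tail, ?_⟩
      rw [SimpleGraph.Walk.support_cons, SimpleGraph.Walk.support_eq_cons q]
      simp

theorem prox_of_range {X : Type} (d : X → X → ℝ)
    (hrange : ∀ x y, d x y = 0 ∨ d x y = 1 ∨ d x y = 2) (A : Set X) (hA : A.Nonempty) :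
    ProximinalSet d A := by
  intro x
  obtain ⟨a, ha⟩ := hA
  set R := {r | ∃ c ∈ ({x} : Set X), ∃ b ∈ A, d c b = r} with hR
  have hsub : R ⊆ {0, 1, 2} := by
    rintro r ⟨c, hc, b, hb, rfl⟩
    rcases hrange c b with h|h|h <;> simp [h]
  have hne : R.Nonempty := ⟨d x a, x, rfl, a, ha, rfl⟩
  have hfin : R.Finite :=
    ((Set.finite_singleton (2:ℝ)).insert 1 |>.insert 0).subset hsub
  have hmem : sInf R ∈ R := hne.csInf_mem hfin
  obtain ⟨c, hc, b, hb, he⟩ := hmem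
  rcases hc with rfl
  exact ⟨b, hb, he⟩

end AuxLemmas

section MainLemmas

variable {X : Type}

theorem main_bwd [Nonempty X] (G : Gr X) (hV : G.verts = Set.univ)
    (d : X → X → ℝ) (A B : Set X) (hp : IsPathProximinal d A B G) :
    ∀ v : X, ∃ u, G.Adj v u := by
  intro v
  obtain ⟨_, _, _, _, _, Ps, hne, hbe, hG⟩ := hp.1
  have hv : v ∈ (sSup Ps).verts := by rw [← hG, hV]; trivial
  rw [SimpleGraph.Subgraph.verts_sSup] at hv
  simp only [Set.mem_iUnion] at hv
  obtain ⟨P, hP, hvP⟩ := hv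
  obtain ⟨⟨l, hnd, h2, hverts, hadj⟩, _, _⟩ := hbe P hP
  have hvl : v ∈ l := by rw [hverts] at hvP; exact hvP
  obtain ⟨u, hu⟩ := exists_infix_pair hvl h2
  have hPadj : P.Adj v u := (hadj v u).mpr hu
  have hPG : P ≤ G := hG ▸ le_sSup hP
  exact ⟨u, hPG.2 hPadj⟩

theorem main_fwd [Nonempty X] (G : Gr X) (hV : G.verts = Set.univ)
    (hmin : ∀ v : X, ∃ u, G.Adj v u) :
    ∃ (d : X → X → ℝ) (A B : Set X), IsMetric d ∧ IsPathProximinal d A B G := by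
  classical
  set S := G.spanningCoe with hS
  let rep : X → X := fun v => (S.connectedComponentMk v).out
  have hrep : ∀ v, S.Reachable v (rep v) := by
    intro v
    have : S.connectedComponentMk (rep v) = S.connectedComponentMk v :=
      (S.connectedComponentMk v).out_eq
    exact (SimpleGraph.ConnectedComponent.eq.mp this).symm
  have hcomp : ∀ u v, S.Reachable u v → rep u = rep v := by
    intro u v h
    show (S.connectedComponentMk u).out = (S.connectedComponentMk v).out
    rw [SimpleGraph.ConnectedComponent.eq.mpr h]
  set A : Set X := {v | rep v ≠ v} with hA
  set B : Set X := {v | rep v = v} with hB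
  have hABuniv : A ∪ B = Set.univ := by
    ext v; simp only [Set.mem_union, Set.mem_univ, iff_true, hA, hB, Set.mem_setOf_eq]
    exact (em (rep v = v)).symm
  have hdisj : Disjoint A B := by
    rw [Set.disjoint_left]
    intro v hv hv'
    exact hv hv'
  have hadj_ne : ∀ {x y : X}, G.Adj x y → x ≠ y := by
    intro x y h
    simpa using G.adj_sub h
  have hrep_idem : ∀ v, rep (rep v) = rep v := fun v => (hcomp v (rep v) (hrep v)).symm
  -- basic nonemptiness
  obtain ⟨v₀⟩ := ‹Nonempty X›
  have hBne : B.Nonempty := ⟨rep v₀, hrep_idem v₀⟩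
  obtain ⟨u₀, hu₀⟩ := hmin (rep v₀)
  have hu₀A : u₀ ∈ A := by
    have hreach : S.Reachable (rep v₀) u₀ := SimpleGraph.Adj.reachable hu₀
    have : rep u₀ = rep v₀ := by
      rw [← hcomp (rep v₀) u₀ hreach, hrep_idem]
    show rep u₀ ≠ u₀
    rw [this]
    exact hadj_ne hu₀
  have hAne : A.Nonempty := ⟨u₀, hu₀A⟩
  have hcross : ∃ a ∈ A, ∃ b ∈ B, G.Adj a b :=
    ⟨u₀, hu₀A, rep v₀, hrep_idem v₀, hu₀.symm⟩
  -- covering of edges by be-paths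
  have two_path : ∀ a b : X, a ∈ A → b ∈ B → G.Adj a b →
      ∃ P, P ≤ G ∧ IsBePath A B P ∧ P.Adj a b := by
    intro a b ha hb hab
    have hnd : ([a, b] : List X).Nodup := by simp [hadj_ne hab]
    refine ⟨pathOfList [a,b] hnd, ⟨by rw [hV]; exact Set.subset_univ _, ?_⟩, ?_,
      Or.inl (List.infix_refl _)⟩
    · rintro x y (h|h)
      · have he := h.sublist.eq_of_length (by simp)
        simp only [List.cons.injEq, and_true] at he
        obtain ⟨rfl, rfl⟩ := he
        exact hab
      · have he := h.sublist.eq_of_length (by simp)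
        simp only [List.cons.injEq, and_true] at he
        obtain ⟨rfl, rfl⟩ := he
        exact G.adj_symm hab
    · refine ⟨⟨[a,b], isPathGraphOn_pathOfList _ _ (by simp)⟩, ?_, a, b, ha, hb,
        Or.inl (List.infix_refl _), ?_⟩
      · intro v _
        rcases em (rep v = v) with h | h
        · exact Or.inr h
        · exact Or.inl h
      · rintro x y hadj hxA hyB
        rcases hadj with h | h
        · have he := h.sublist.eq_of_length (by simp)
          simp only [List.cons.injEq, and_true] at he
          exact ⟨he.1, he.2⟩
        · have he := h.sublist.eq_of_length (by simp)
          simp only [List.cons.injEq, and_true] at he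
          exact absurd (he.1 ▸ (hyB : rep y = y) : rep a = a) (ha : rep a ≠ a)
  have edge_cover : ∀ x y : X, G.Adj x y → ∃ P, P ≤ G ∧ IsBePath A B P ∧ P.Adj x y := by
    intro x y hxy
    by_cases hx : rep x = x <;> by_cases hy : rep y = y
    · exfalso
      have : rep x = rep y := hcomp x y (SimpleGraph.Adj.reachable hxy)
      exact hadj_ne hxy (by rw [← hx, this, hy])
    · -- x ∈ B, y ∈ A
      obtain ⟨P, hPG, hbe, hPadj⟩ := two_path y x hy hx (G.adj_symm hxy)
      exact ⟨P, hPG, hbe, P.adj_symm hPadj⟩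
    · exact two_path x y hx hy hxy
    · -- both in A
      obtain ⟨u, w, hw, h2, hinf⟩ := walk_construct G rep hrep hxy
      refine ⟨pathOfList w.support hw.support_nodup, pathOfList_le G hV w hw.support_nodup,
        isBePath_of_walk G rep hcomp w hw h2 (hrep_idem x), hinf⟩
  -- the family of be-paths
  set Ps : Set (Gr X) := {P | P ≤ G ∧ IsBePath A B P} with hPs
  have hPsne : Ps.Nonempty := by
    obtain ⟨a, ha, b, hb, hab⟩ := hcross
    obtain ⟨P, hPG, hbe, -⟩ := edge_cover a b hab
    exact ⟨P, hPG, hbe⟩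
  have hGsup : G = sSup Ps := by
    apply le_antisymm
    · constructor
      · intro v _
        obtain ⟨u, hu⟩ := hmin v
        obtain ⟨P, hPG, hbe, hPadj⟩ := edge_cover v u hu
        exact (le_sSup (show P ∈ Ps from ⟨hPG, hbe⟩)).1 (P.edge_vert hPadj)
      · intro v w h
        obtain ⟨P, hPG, hbe, hPadj⟩ := edge_cover v w h
        exact (le_sSup (show P ∈ Ps from ⟨hPG, hbe⟩)).2 hPadj
    · exact sSup_le fun P hP => hP.1
  have hbip : IsPathBipartite A B G :=
    ⟨hAne, hBne, hdisj, by rw [hV]; exact Set.subset_univ _, by rw [hV]; exact Set.subset_univ _,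
      Ps, hPsne, fun P hP => hP.2, hGsup⟩
  -- the metric
  set d : X → X → ℝ := fun x y => if x = y then 0 else if G.Adj x y then 1 else 2 with hd
  have hrange : ∀ x y, d x y = 0 ∨ d x y = 1 ∨ d x y = 2 := by
    intro x y
    simp only [hd]
    split_ifs <;> simp
  have hd_self : ∀ x, d x x = 0 := by intro x; simp [hd]
  have hd_adj : ∀ {x y}, G.Adj x y → d x y = 1 := by
    intro x y h
    simp [hd, hadj_ne h, h]
  have hd_nadj : ∀ {x y}, x ≠ y → ¬ G.Adj x y → d x y = 2 := by
    intro x y h h'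
    simp [hd, h, h']
  have hd_pos : ∀ {x y}, x ≠ y → 1 ≤ d x y := by
    intro x y h
    by_cases h' : G.Adj x y
    · rw [hd_adj h']
    · rw [hd_nadj h h']; norm_num
  have hmetric : IsMetric d := by
    refine ⟨⟨fun x y => ?_, fun x y => ?_, fun x y => ?_⟩, fun x y z => ?_⟩
    · rcases hrange x y with h|h|h <;> rw [h] <;> norm_num
    · by_cases h : x = y
      · simp [hd, h]
      · simp only [hd, if_neg h, if_neg (Ne.symm h)]
        rw [SimpleGraph.Subgraph.adj_comm]
    · constructor
      · intro he
        by_contra h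
        rcases hrange x y with h'|h'|h'
        · simp only [hd] at h'
          rw [if_neg h] at h'
          split_ifs at h' <;> norm_num at h'
        · rw [he] at h'; norm_num at h'
        · rw [he] at h'; norm_num at h'
      · intro h; rw [h, hd_self]
    · by_cases hxy : x = y
      · rw [hxy, hd_self]
        have h1 : 0 ≤ d y z := by rcases hrange y z with h|h|h <;> rw [h] <;> norm_num
        have h2 : 0 ≤ d z y := by rcases hrange z y with h|h|h <;> rw [h] <;> norm_num
        linarith
      · by_cases hxz : x = z
        · rw [hxz, hd_self]; linarith [le_refl (d z y)]
        · by_cases hzy : z = y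
          · rw [hzy, hd_self]
            simp only [add_zero]
            exact le_refl _
          · have h1 : d x y ≤ 2 := by rcases hrange x y with h|h|h <;> rw [h] <;> norm_num
            have h2 : 1 ≤ d x z := hd_pos hxz
            have h3 : 1 ≤ d z y := hd_pos hzy
            linarith
  -- setDist A B = 1
  have hsd : setDist d A B = 1 := by
    obtain ⟨a, ha, b, hb, hab⟩ := hcross
    have h1mem : (1:ℝ) ∈ {r | ∃ a ∈ A, ∃ b ∈ B, d a b = r} := ⟨a, ha, b, hb, hd_adj hab⟩
    have hlb : ∀ r ∈ {r | ∃ a ∈ A, ∃ b ∈ B, d a b = r}, (1:ℝ) ≤ r := by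
      rintro r ⟨a', ha', b', hb', rfl⟩
      have hne : a' ≠ b' := fun e => (Set.disjoint_left.mp hdisj ha') (e ▸ hb')
      exact hd_pos hne
    exact le_antisymm (csInf_le ⟨1, hlb⟩ h1mem) (le_csInf ⟨1, h1mem⟩ hlb)
  refine ⟨d, A, B, hmetric, hbip, prox_of_range d hrange A hAne, prox_of_range d hrange B hBne,
    ?_⟩
  intro x _ y _ hne
  rw [hsd]
  constructor
  · intro h; rw [hd_adj h]
  · intro h
    by_contra h'
    rw [hd_nadj hne h'] at h
    norm_num at h

end MainLemmas

theorem stmt15 {X : Type} [Nonempty X] (G : Gr X) (hV : G.verts = Set.univ) :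
    ((∀ v : X, ∃ u, G.Adj v u) ↔
        ∃ (d : X → X → ℝ) (A B : Set X), IsSemimetric d ∧ IsPathProximinal d A B G) ∧
    ((∀ v : X, ∃ u, G.Adj v u) ↔
        ∃ (d : X → X → ℝ) (A B : Set X), IsMetric d ∧ IsPathProximinal d A B G) := by
  constructor
  · constructor
    · intro h
      obtain ⟨d, A, B, hm, hp⟩ := main_fwd G hV h
      exact ⟨d, A, B, hm.1, hp⟩
    · rintro ⟨d, A, B, -, hp⟩
      exact main_bwd G hV d A B hp
  · constructor
    · exact main_fwd G hV
    · rintro ⟨d, A, B, -, hp⟩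
      exact main_bwd G hV d A B hp
end

section
/- Let G be a bipartite graph with parts A and B that is proximinal for a semimetric space (X,d) with X = V(G) = A ∪ B. Then G is a path-proximinal graph (for some semimetric) if and only if A₀ = A and B₀ = B. -/
open SimpleGraph Set

/-! ### Auxiliary lemmas -/

lemma infix_pair_iff {V : Type} {x y a b : V} :
    [x, y] <:+: [a, b] ↔ x = a ∧ y = b := by
  constructor
  · rintro ⟨s, t, h⟩
    have hl := congrArg List.length h
    simp only [List.length_append, List.length_cons, List.length_nil] at hl
    have hs : s = [] := List.length_eq_zero_iff.mp (by omega)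
    have ht : t = [] := List.length_eq_zero_iff.mp (by omega)
    subst hs ht
    simp only [List.nil_append, List.append_nil, List.cons.injEq, and_true] at h
    exact h
  · rintro ⟨rfl, rfl⟩
    exact List.infix_refl _

lemma mem_has_pair {V : Type} :
    ∀ (l : List V) (v : V), v ∈ l → 2 ≤ l.length →
      ∃ w, [v, w] <:+: l ∨ [w, v] <:+: l
  | [], v, h, _ => absurd h List.not_mem_nil
  | [a], _, _, hl => by simp at hl
  | a :: b :: t, v, h, _ => by
    rcases List.mem_cons.mp h with rfl | h'
    · exact ⟨b, Or.inl ⟨[], t, rfl⟩⟩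
    · rcases List.mem_cons.mp h' with rfl | h''
      · exact ⟨a, Or.inr ⟨[], t, rfl⟩⟩
      · obtain ⟨w, hw⟩ := mem_has_pair (b :: t) v (List.mem_cons_of_mem _ h'')
          (Nat.succ_le_succ (List.length_pos_iff.mpr (List.ne_nil_of_mem h'')))
        exact ⟨w, hw.imp List.infix_cons List.infix_cons⟩

/-- The single-edge subgraph of `⊤` with vertices `a`, `b`. -/
def edgeGr {V : Type} (a b : V) (hab : a ≠ b) : Gr V where
  verts := {a, b}
  Adj x y := (x = a ∧ y = b) ∨ (x = b ∧ y = a)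
  adj_sub h := by
    rcases h with ⟨rfl, rfl⟩ | ⟨rfl, rfl⟩
    · exact hab
    · exact hab.symm
  edge_vert h := by
    rcases h with ⟨rfl, _⟩ | ⟨rfl, _⟩ <;> simp
  symm := ⟨fun x y h => by tauto⟩

lemma edgeGr_isBePath {V : Type} {A B : Set V} {a b : V} (ha : a ∈ A) (hb : b ∈ B)
    (hAB : Disjoint A B) (hab : a ≠ b) : IsBePath A B (edgeGr a b hab) := by
  refine ⟨⟨[a, b], ?_, ?_, ?_, ?_⟩, ?_, a, b, ha, hb, Or.inl ⟨rfl, rfl⟩, ?_⟩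
  · simp [hab]
  · simp
  · ext v; simp [edgeGr]
  · intro x y
    show ((x = a ∧ y = b) ∨ _) ↔ _
    rw [infix_pair_iff, infix_pair_iff]
    tauto
  · intro v hv
    rcases hv with rfl | rfl
    · exact Or.inl ha
    · exact Or.inr hb
  · rintro x y (⟨rfl, rfl⟩ | ⟨rfl, rfl⟩) hxA hyB
    · exact ⟨rfl, rfl⟩
    · exact absurd (hAB.ne_of_mem hxA hb) (fun h => h rfl)

theorem stmt16 {X : Type} (d : X → X → ℝ) (A B : Set X) (G : Gr X)
    (hd : IsSemimetric d) (hU : A ∪ B = Set.univ)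
    (hprox : IsProximinalGraph d A B G) :
    (∃ (ρ : X → X → ℝ) (A' B' : Set X), IsSemimetric ρ ∧ IsPathProximinal ρ A' B' G) ↔
      ({a ∈ A | ∃ b ∈ B, d a b = setDist d A B} = A ∧
       {b ∈ B | ∃ a ∈ A, d a b = setDist d A B} = B) := by
  obtain ⟨hAne, hBne, hAB, hverts, hbip, _, _, hadj⟩ := hprox
  constructor
  · -- forward: path-proximinal ⟹ every vertex has an edge ⟹ A₀ = A ∧ B₀ = B
    rintro ⟨ρ, A', B', -, ⟨-, -, -, -, -, Ps, -, hPs, rfl⟩, -⟩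
    -- every vertex of sSup Ps has a neighbor
    have key : ∀ v ∈ (sSup Ps : Gr X).verts, ∃ w, (sSup Ps : Gr X).Adj v w := by
      intro v hv
      rw [SimpleGraph.Subgraph.verts_sSup] at hv
      simp only [Set.mem_iUnion] at hv
      obtain ⟨P, hP, hvP⟩ := hv
      obtain ⟨⟨l, hnd, hlen, hvts, hadjP⟩, -, -⟩ := hPs P hP
      rw [hvts] at hvP
      obtain ⟨w, hw⟩ := mem_has_pair l v hvP hlen
      refine ⟨w, SimpleGraph.Subgraph.sSup_adj.mpr ⟨P, hP, ?_⟩⟩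
      exact (hadjP v w).mpr hw
    constructor
    · ext a
      simp only [Set.mem_setOf_eq, and_iff_left_iff_imp]
      intro ha
      obtain ⟨w, hw⟩ := key a (by rw [hverts]; exact Or.inl ha)
      rcases hbip a w hw with ⟨-, hwB⟩ | ⟨haB, -⟩
      · exact ⟨w, hwB, (hadj a ha w hwB).mp hw⟩
      · exact absurd rfl (hAB.ne_of_mem ha haB)
    · ext b
      simp only [Set.mem_setOf_eq, and_iff_left_iff_imp]
      intro hb
      obtain ⟨w, hw⟩ := key b (by rw [hverts]; exact Or.inr hb)
      rcases hbip b w hw with ⟨hbA, -⟩ | ⟨-, hwA⟩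
      · exact absurd rfl (hAB.ne_of_mem hbA hb)
      · exact ⟨w, hwA, (hadj w hwA b hb).mp hw.symm⟩
  · -- backward direction
    rintro ⟨hA0, hB0⟩
    classical
    set ρ : X → X → ℝ := fun x y => if x = y then 0 else if G.Adj x y then 1 else 2
      with hρdef
    have hρsymm : ∀ x y, ρ x y = ρ y x := by
      intro x y
      simp only [hρdef]
      by_cases hxy : x = y
      · subst hxy; simp
      · rw [if_neg hxy, if_neg (Ne.symm hxy), SimpleGraph.Subgraph.adj_comm]
    have hρnn : ∀ x y, 0 ≤ ρ x y := by
      intro x y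
      simp only [hρdef]
      split_ifs <;> norm_num
    have hρsemi : IsSemimetric ρ := by
      refine ⟨hρnn, hρsymm, fun x y => ?_⟩
      simp only [hρdef]
      split_ifs with h1 h2 <;> simp [h1] <;> norm_num
    -- every a ∈ A has an edge; every b ∈ B has one
    have hedgeA : ∀ a ∈ A, ∃ b ∈ B, G.Adj a b := by
      intro a ha
      rw [← hA0] at ha
      obtain ⟨haA, b, hb, hdab⟩ := ha
      exact ⟨b, hb, (hadj a haA b hb).mpr hdab⟩
    have hedgeB : ∀ b ∈ B, ∃ a ∈ A, G.Adj a b := by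
      intro b hb
      rw [← hB0] at hb
      obtain ⟨hbB, a, ha, hdab⟩ := hb
      exact ⟨a, ha, (hadj a ha b hbB).mpr hdab⟩
    have hne : ∀ {a b : X}, a ∈ A → b ∈ B → a ≠ b := fun ha hb => hAB.ne_of_mem ha hb
    -- ρ a b values for a ∈ A, b ∈ B
    have hρval : ∀ a ∈ A, ∀ b ∈ B, ρ a b = 1 ∨ ρ a b = 2 := by
      intro a ha b hb
      simp only [hρdef, if_neg (hne ha hb)]
      split_ifs <;> simp
    -- setDist ρ A B = 1
    have hdist1 : setDist ρ A B = 1 := by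
      obtain ⟨a, ha⟩ := hAne
      obtain ⟨b, hb, hab⟩ := hedgeA a ha
      have h1mem : (1 : ℝ) ∈ {r | ∃ a ∈ A, ∃ b ∈ B, ρ a b = r} := by
        exact ⟨a, ha, b, hb, by simp [hρdef, if_neg (hne ha hb), hab]⟩
      have hlb : ∀ r ∈ {r | ∃ a ∈ A, ∃ b ∈ B, ρ a b = r}, (1 : ℝ) ≤ r := by
        rintro r ⟨a', ha', b', hb', rfl⟩
        rcases hρval a' ha' b' hb' with h | h <;> rw [h] <;> norm_num
      exact le_antisymm (csInf_le ⟨1, hlb⟩ h1mem) (le_csInf ⟨1, h1mem⟩ hlb)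
    -- proximinality of any set under ρ
    have hproxS : ∀ S : Set X, S.Nonempty → ProximinalSet ρ S := by
      intro S hS x
      set T := {r | ∃ u ∈ ({x} : Set X), ∃ v ∈ S, ρ u v = r} with hT
      have hTne : T.Nonempty := by
        obtain ⟨s, hs⟩ := hS
        exact ⟨ρ x s, x, rfl, s, hs, rfl⟩
      have hTsub : T ⊆ {0, 1, 2} := by
        rintro r ⟨u, rfl, v, hv, rfl⟩
        simp only [hρdef]
        split_ifs <;> simp
      have hTfin : T.Finite := Set.Finite.subset (by simp : ({0, 1, 2} : Set ℝ).Finite) hTsub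
      have := hTne.csInf_mem hTfin
      obtain ⟨u, hu, v, hv, hρuv⟩ := this
      rw [Set.mem_singleton_iff] at hu
      subst hu
      exact ⟨v, hv, by rw [hρuv]; rfl⟩
    -- the family of single-edge be-paths
    set Ps : Set (Gr X) :=
      {P | ∃ a, ∃ b, ∃ (ha : a ∈ A) (hb : b ∈ B) (_ : G.Adj a b), P = edgeGr a b (hne ha hb)}
      with hPsdef

    have hPsne : Ps.Nonempty := by
      obtain ⟨a, ha⟩ := hAne
      obtain ⟨b, hb, hab⟩ := hedgeA a ha
      exact ⟨edgeGr a b (hne ha hb), a, b, ha, hb, hab, rfl⟩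
    have hPsbe : ∀ P ∈ Ps, IsBePath A B P := by
      rintro P ⟨a, b, ha, hb, hab, rfl⟩
      exact edgeGr_isBePath ha hb hAB _
    have hGsup : G = sSup Ps := by
      apply SimpleGraph.Subgraph.ext
      · rw [SimpleGraph.Subgraph.verts_sSup]
        apply Set.Subset.antisymm
        · rw [hverts]
          rintro v (hv | hv)
          · obtain ⟨b, hb, hab⟩ := hedgeA v hv
            exact Set.mem_iUnion₂.mpr ⟨edgeGr v b (hne hv hb), ⟨v, b, hv, hb, hab, rfl⟩,
              Or.inl rfl⟩
          · obtain ⟨a, ha, hab⟩ := hedgeB v hv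
            exact Set.mem_iUnion₂.mpr ⟨edgeGr a v (hne ha hv), ⟨a, v, ha, hv, hab, rfl⟩,
              Or.inr rfl⟩
        · intro v hv
          obtain ⟨P, hP, hvP⟩ := Set.mem_iUnion₂.mp hv
          obtain ⟨a, b, ha, hb, hab, rfl⟩ := hP
          simp only [edgeGr, Set.mem_insert_iff, Set.mem_singleton_iff] at hvP
          rw [hverts]
          rcases hvP with rfl | rfl
          · exact Or.inl ha
          · exact Or.inr hb
      · ext x y
        rw [SimpleGraph.Subgraph.sSup_adj]
        constructor
        · intro hxy
          rcases hbip x y hxy with ⟨hx, hy⟩ | ⟨hx, hy⟩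
          · exact ⟨edgeGr x y (hne hx hy), ⟨x, y, hx, hy, hxy, rfl⟩, Or.inl ⟨rfl, rfl⟩⟩
          · exact ⟨edgeGr y x (hne hy hx), ⟨y, x, hy, hx, hxy.symm, rfl⟩, Or.inr ⟨rfl, rfl⟩⟩
        · rintro ⟨P, ⟨a, b, ha, hb, hab, rfl⟩, hxy⟩
          rcases hxy with ⟨rfl, rfl⟩ | ⟨rfl, rfl⟩
          · exact hab
          · exact hab.symm
    refine ⟨ρ, A, B, hρsemi, ⟨hAne, hBne, hAB, ?_, ?_, Ps, hPsne, hPsbe, hGsup⟩,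
      hproxS A hAne, hproxS B hBne, ?_⟩
    · rw [hverts]; exact Set.subset_union_left
    · rw [hverts]; exact Set.subset_union_right
    · intro x _ y _ hxy
      rw [hdist1]
      simp only [hρdef, if_neg hxy]
      split_ifs with h
      · simp [h]
      · simp only [h, false_iff, not_le]
        norm_num
end
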